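/- arXiv:1512.01892 — 10 statements merged into one kernel-verified Lean document; each statement's English description precedes it below -/
import Mathlib

section
/- Let M be a Hermitian positive semidefinite matrix all of whose nonzero eigenvalues are at least μ > 0, and let 0 < ε < 1/2. If Z is a Hermitian matrix with Z ≈_ε (M + εμI)⁻¹, then for any b in the range of M with M x = b, one has ‖x - Z b‖²_M ≤ 6ε ‖x‖²_M, where ‖v‖²_M = v* M v. -/
/-!
Write `N = M + εμI`, `b = Mx` and `w = Zb`. Expanding the square gives
`‖x - w‖²_M = xᴴMx - 2 bᴴZb + wᴴMw`. Cauchy–Schwarz in the semi-inner product of `Z`,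
together with `Z ⪯ e^ε N⁻¹`, gives `wᴴMw ≤ wᴴNw ≤ e^ε bᴴZb`, while `Z ⪰ e^{-ε} N⁻¹` gives
`bᴴZb ≥ e^{-ε} bᴴN⁻¹b`. The spectral gap of `M` means `μM ⪯ M²`, and since `N` commutes
with `M` this yields `M ⪯ (1 + ε) MN⁻¹M`, i.e. `xᴴMx ≤ (1 + ε) bᴴN⁻¹b`. The rest is real
arithmetic.
-/

open Matrix
open scoped ComplexOrder MatrixOrder

namespace Matrix

variable {𝕜 n : Type*} [RCLike 𝕜] [Fintype n]

theorem IsHermitian.star_mulVec_dotProduct {A : Matrix n n 𝕜} (hA : A.IsHermitian)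
    (u v : n → 𝕜) : star (A *ᵥ u) ⬝ᵥ v = star u ⬝ᵥ A *ᵥ v := by
  rw [star_mulVec, hA.eq, ← dotProduct_mulVec]

theorem IsHermitian.star_mulVec_dotProduct_mulVec_mulVec {A : Matrix n n 𝕜} (hA : A.IsHermitian)
    (P : Matrix n n 𝕜) (x : n → 𝕜) :
    star (A *ᵥ x) ⬝ᵥ P *ᵥ (A *ᵥ x) = star x ⬝ᵥ (A * P * A) *ᵥ x := by
  rw [hA.star_mulVec_dotProduct, mulVec_mulVec, mulVec_mulVec]

theorem re_dotProduct_mulVec_le_of_le {A B : Matrix n n 𝕜} (hAB : A ≤ B) (v : n → 𝕜) :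
    RCLike.re (star v ⬝ᵥ A *ᵥ v) ≤ RCLike.re (star v ⬝ᵥ B *ᵥ v) := by
  have := (le_iff.mp hAB).re_dotProduct_nonneg v
  rwa [sub_mulVec, dotProduct_sub, map_sub, sub_nonneg] at this

theorem re_dotProduct_smul_mulVec (c : ℝ) (A : Matrix n n 𝕜) (v : n → 𝕜) :
    RCLike.re (star v ⬝ᵥ (c • A) *ᵥ v) = c * RCLike.re (star v ⬝ᵥ A *ᵥ v) := by
  rw [smul_mulVec, dotProduct_smul, RCLike.smul_re]

theorem PosSemidef.norm_dotProduct_mulVec_sq_le {A : Matrix n n 𝕜} (hA : A.PosSemidef)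
    (u v : n → 𝕜) :
    ‖star u ⬝ᵥ A *ᵥ v‖ ^ 2 ≤ RCLike.re (star u ⬝ᵥ A *ᵥ u) * RCLike.re (star v ⬝ᵥ A *ᵥ v) := by
  let _ := A.toSeminormedAddCommGroup hA
  let _ := A.toInnerProductSpace hA
  have h := inner_mul_inner_self_le (𝕜 := 𝕜) u v
  rw [norm_inner_symm v u, ← sq] at h
  have hinner (x y : n → 𝕜) : inner 𝕜 x y = star x ⬝ᵥ A *ᵥ y := dotProduct_comm _ _
  simpa only [hinner] using h

theorem IsHermitian.re_dotProduct_sub_mulVec_sub {M Z : Matrix n n 𝕜} (hM : M.IsHermitian)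
    (hZ : Z.IsHermitian) (x : n → 𝕜) :
    RCLike.re (star (x - Z *ᵥ (M *ᵥ x)) ⬝ᵥ M *ᵥ (x - Z *ᵥ (M *ᵥ x))) =
      RCLike.re (star x ⬝ᵥ M *ᵥ x) - 2 * RCLike.re (star (M *ᵥ x) ⬝ᵥ Z *ᵥ (M *ᵥ x)) +
        RCLike.re (star (Z *ᵥ (M *ᵥ x)) ⬝ᵥ M *ᵥ (Z *ᵥ (M *ᵥ x))) := by
  have h₁ : star x ⬝ᵥ M *ᵥ (Z *ᵥ (M *ᵥ x)) = star (M *ᵥ x) ⬝ᵥ Z *ᵥ (M *ᵥ x) :=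
    (hM.star_mulVec_dotProduct _ _).symm
  have h₂ : star (Z *ᵥ (M *ᵥ x)) ⬝ᵥ M *ᵥ x = star (M *ᵥ x) ⬝ᵥ Z *ᵥ (M *ᵥ x) :=
    hZ.star_mulVec_dotProduct _ _
  rw [mulVec_sub, star_sub, sub_dotProduct, dotProduct_sub, dotProduct_sub, h₁, h₂]
  simp only [map_sub]
  ring

variable [DecidableEq n]

theorem re_dotProduct_mulVec_mulVec_le {Z N : Matrix n n 𝕜} (hZ : Z.PosSemidef) (hN : N.PosDef)
    {c : ℝ} (hc : 0 ≤ c) (hZN : Z ≤ c • N⁻¹) (b : n → 𝕜) :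
    RCLike.re (star (Z *ᵥ b) ⬝ᵥ N *ᵥ (Z *ᵥ b)) ≤ c * RCLike.re (star b ⬝ᵥ Z *ᵥ b) := by
  set w := Z *ᵥ b
  set s := RCLike.re (star w ⬝ᵥ N *ᵥ w)
  set r := RCLike.re (star b ⬝ᵥ Z *ᵥ b)
  have hNN : N⁻¹ * N = 1 := nonsing_inv_mul N ((isUnit_iff_isUnit_det N).mp hN.isUnit)
  have hcross : star (N *ᵥ w) ⬝ᵥ Z *ᵥ b = star w ⬝ᵥ N *ᵥ w := hN.1.star_mulVec_dotProduct _ _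
  have hNw : RCLike.re (star (N *ᵥ w) ⬝ᵥ Z *ᵥ (N *ᵥ w)) ≤ c * s := by
    refine (re_dotProduct_mulVec_le_of_le hZN _).trans_eq ?_
    rw [re_dotProduct_smul_mulVec, hN.1.star_mulVec_dotProduct_mulVec_mulVec, mul_assoc, hNN,
      mul_one]
  have hs : 0 ≤ s := hN.posSemidef.re_dotProduct_nonneg w
  have hr : 0 ≤ r := hZ.re_dotProduct_nonneg b
  have hCS : s ^ 2 ≤ c * s * r :=
    calc s ^ 2 ≤ ‖star (N *ᵥ w) ⬝ᵥ Z *ᵥ b‖ ^ 2 := by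
          rw [hcross]; gcongr; exact RCLike.re_le_norm _
      _ ≤ RCLike.re (star (N *ᵥ w) ⬝ᵥ Z *ᵥ (N *ᵥ w)) * r := hZ.norm_dotProduct_mulVec_sq_le _ _
      _ ≤ c * s * r := by gcongr
  nlinarith [mul_nonneg hc hr]

theorem PosSemidef.smul_le_mul_self {M : Matrix n n 𝕜} (hM : M.PosSemidef) {μ : ℝ}
    (heig : ∀ i, hM.1.eigenvalues i ≠ 0 → μ ≤ hM.1.eigenvalues i) : μ • M ≤ M * M := by
  have : IsSelfAdjoint M := hM.1.isSelfAdjoint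
  rw [← sub_nonneg, show M * M - μ • M = cfc (fun t : ℝ => t * t - μ * t) M by
    rw [cfc_sub .., cfc_mul .., cfc_const_mul .., cfc_id' ℝ M]]
  refine cfc_nonneg fun t ht => ?_
  obtain ⟨i, rfl⟩ := hM.1.spectrum_real_eq_range_eigenvalues ▸ ht
  rcases eq_or_ne (hM.1.eigenvalues i) 0 with h | h
  · simp [h]
  · nlinarith [heig i h, hM.eigenvalues_nonneg i]

theorem le_one_add_smul_mul_inv_mul {M : Matrix n n 𝕜} {μ t : ℝ} (hgap : μ • M ≤ M * M)
    (ht : 0 ≤ t) (hN : (M + (t * μ) • (1 : Matrix n n 𝕜)).PosDef) :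
    M ≤ (1 + t) • (M * (M + (t * μ) • (1 : Matrix n n 𝕜))⁻¹ * M) := by
  set N := M + (t * μ) • (1 : Matrix n n 𝕜)
  have hdet : IsUnit N.det := (isUnit_iff_isUnit_det N).mp hN.isUnit
  have hcomm : Commute N⁻¹ M := by
    have hMN : Commute M N := (Commute.refl M).add_right ((Commute.one_right M).smul_right _)
    calc N⁻¹ * M = N⁻¹ * (M * N) * N⁻¹ := by
          rw [mul_assoc, mul_assoc, mul_nonsing_inv N hdet, mul_one]
      _ = M * N⁻¹ := by rw [hMN.eq, ← mul_assoc, nonsing_inv_mul N hdet, one_mul]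
  have key : (1 + t) • (M * N⁻¹ * M) - M = t • (N⁻¹ * (M * M - μ • M)) :=
    calc (1 + t) • (M * N⁻¹ * M) - M = (1 + t) • (N⁻¹ * (M * M)) - N⁻¹ * (N * M) := by
          rw [← mul_assoc N⁻¹ N M, nonsing_inv_mul N hdet, one_mul, ← hcomm.eq, mul_assoc]
      _ = N⁻¹ * ((1 + t) • (M * M) - N * M) := by rw [mul_sub, mul_smul_comm]
      _ = t • (N⁻¹ * (M * M - μ • M)) := by
          rw [← mul_smul_comm t N⁻¹]
          congr 1
          simp only [N, add_mul, smul_mul_assoc, one_mul]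
          module
  rw [← sub_nonneg, key]
  exact smul_nonneg ht (Commute.mul_nonneg hN.inv.posSemidef.nonneg (sub_nonneg.mpr hgap)
    (hcomm.mul_right hcomm |>.sub_right (hcomm.smul_right μ)))

end Matrix

theorem sub_two_mul_add_le_six_mul_of_exp_bounds {ε X q r m : ℝ} (hε0 : 0 < ε)
    (hε : ε < 1 / 2) (hX : 0 ≤ X) (hXq : X ≤ (1 + ε) * q) (hqr : Real.exp (-ε) * q ≤ r)
    (hm : m ≤ Real.exp ε * r) :
    X - 2 * r + m ≤ 6 * ε * X := by
  have hexp : Real.exp ε < 2 :=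
    calc Real.exp ε < Real.exp (Real.log 2) := by gcongr; linarith [Real.log_two_gt_d9]
      _ = 2 := Real.exp_log two_pos
  have hexp' : 1 - ε ≤ Real.exp (-ε) := by linarith [Real.add_one_le_exp (-ε)]
  have hmul : Real.exp ε * Real.exp (-ε) = 1 := by
    rw [← Real.exp_add, add_neg_cancel, Real.exp_zero]
  have hq : 0 ≤ q := by nlinarith
  calc X - 2 * r + m ≤ X + (1 - 2 * Real.exp (-ε)) * q := by
        nlinarith [mul_le_mul_of_nonpos_left hqr (by linarith : Real.exp ε - 2 ≤ 0)]
    _ ≤ X + (2 * ε - 1) * q := by nlinarith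
    _ ≤ 3 * ε * X := by rcases le_or_gt 0 (X + (2 * ε - 1) * q) with h | h <;> nlinarith
    _ ≤ 6 * ε * X := by nlinarith

/-- If all nonzero eigenvalues of the Hermitian PSD matrix `M` are at least `μ > 0`,
`0 < ε < 1/2`, and `Z ≈_ε (M + εμI)⁻¹`, then for any `b` with `M x = b` we have
`‖x - Z b‖²_M ≤ 6 ε ‖x‖²_M`. -/
theorem stmt_3 {n : Type*} [Fintype n] [DecidableEq n]
    (M Z : Matrix n n ℂ) (hM : M.PosSemidef) (hZ : Z.IsHermitian)
    (μ ε : ℝ) (hμ : 0 < μ) (hε0 : 0 < ε) (hε : ε < 1 / 2)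
    (heig : ∀ i, hM.1.eigenvalues i ≠ 0 → μ ≤ hM.1.eigenvalues i)
    (happrox1 : (Real.exp ε • (M + (ε * μ) • (1 : Matrix n n ℂ))⁻¹ - Z).PosSemidef)
    (happrox2 : (Z - Real.exp (-ε) • (M + (ε * μ) • (1 : Matrix n n ℂ))⁻¹).PosSemidef)
    (x b : n → ℂ) (hxb : M.mulVec x = b) :
    (star (x - Z.mulVec b) ⬝ᵥ M.mulVec (x - Z.mulVec b)).re ≤
      6 * ε * (star x ⬝ᵥ M.mulVec x).re := by
  subst hxb
  set N := M + (ε * μ) • (1 : Matrix n n ℂ)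
  have hN : N.PosDef := PosDef.posSemidef_add hM (PosDef.one.smul (mul_pos hε0 hμ))
  have hZpsd : Z.PosSemidef :=
    (smul_nonneg (Real.exp_pos _).le hN.inv.posSemidef.nonneg |>.trans happrox2).posSemidef
  have hXq := re_dotProduct_mulVec_le_of_le
    (le_one_add_smul_mul_inv_mul (hM.smul_le_mul_self heig) hε0.le hN) x
  rw [re_dotProduct_smul_mulVec, ← hM.1.star_mulVec_dotProduct_mulVec_mulVec] at hXq
  have hqr := re_dotProduct_mulVec_le_of_le happrox2 (M *ᵥ x)
  rw [re_dotProduct_smul_mulVec] at hqr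
  have hMN : M ≤ N :=
    le_add_of_nonneg_right (smul_nonneg (mul_pos hε0 hμ).le PosSemidef.one.nonneg)
  calc _ = _ := hM.1.re_dotProduct_sub_mulVec_sub hZ x
    _ ≤ _ := sub_two_mul_add_le_six_mul_of_exp_bounds hε0 hε (hM.re_dotProduct_nonneg x)
      hXq hqr
      ((re_dotProduct_mulVec_le_of_le hMN _).trans
        (re_dotProduct_mulVec_mulVec_le hZpsd hN (Real.exp_pos ε).le happrox1 _))
end

section
/- Let A be a Hermitian positive definite matrix with condition number κ (ratio of largest to smallest eigenvalue), and suppose A ≈_ε B for a Hermitian positive definite B with ε ≤ 1/(56κ³). Then A³ ≈_{56κ³ε} B³. -/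
/-!
Write `b = a + e`. From `a ≈_ε b` one gets `±e ≤ (exp ε - 1) a`, hence
`‖e‖ ≤ (exp ε - 1) ‖a‖`, and expanding `(a + e)^k` gives
`‖b^k - a^k‖ ≤ ‖a‖^k (exp (k ε) - 1) ≤ κ^k (exp (k ε) - 1) m^k` when `m ≤ a` and `‖a‖ ≤ κ m`.
Since `b^k - a^k` is self-adjoint and `a^k ≥ m^k`, this says `±(b^k - a^k) ≤ ρ a^k` with
`ρ = κ^k (exp (k ε) - 1)`, which yields `a^k ≈_δ b^k` as soon as `exp δ (1 - ρ) ≥ 1`.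
For `k = 3` and `56 κ³ ε ≤ 1` this holds with `δ = 56 κ³ ε`, since then `ρ ≤ 7 κ³ ε`.
-/

open Matrix
open scoped ComplexOrder

section LoewnerApprox

variable {A : Type*} [AddCommGroup A] [PartialOrder A] [Module ℝ A]

/-- `LoewnerApprox δ x y` is `x ≈_δ y`. -/
def LoewnerApprox (δ : ℝ) (x y : A) : Prop :=
  Real.exp (-δ) • y ≤ x ∧ x ≤ Real.exp δ • y

variable [PosSMulMono ℝ A]

theorem LoewnerApprox.symm {ε : ℝ} {x y : A} (h : LoewnerApprox ε x y) :
    LoewnerApprox ε y x := by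
  have h₁ := smul_le_smul_of_nonneg_left h.2 (Real.exp_pos (-ε)).le
  have h₂ := smul_le_smul_of_nonneg_left h.1 (Real.exp_pos ε).le
  rw [smul_smul, ← Real.exp_add, neg_add_cancel, Real.exp_zero, one_smul] at h₁
  rw [smul_smul, ← Real.exp_add, add_neg_cancel, Real.exp_zero, one_smul] at h₂
  exact ⟨h₁, h₂⟩

theorem LoewnerApprox.nonneg {ε : ℝ} {x y : A} (h : LoewnerApprox ε x y) (hx : 0 ≤ x) :
    0 ≤ y :=
  (smul_nonneg (Real.exp_pos (-ε)).le hx).trans h.symm.1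

variable [IsOrderedAddMonoid A]

theorem LoewnerApprox.neg_smul_le_sub_and_sub_le_smul {ε : ℝ} {x y : A} (h : LoewnerApprox ε x y)
    (hx : 0 ≤ x) :
    -((Real.exp ε - 1) • x) ≤ y - x ∧ y - x ≤ (Real.exp ε - 1) • x := by
  have hexp : 1 - Real.exp (-ε) ≤ Real.exp ε - 1 := by
    have := Real.exp_pos ε
    have h1 : Real.exp ε * Real.exp (-ε) = 1 := by rw [← Real.exp_add]; simp
    nlinarith [sq_nonneg (Real.exp ε - 1)]
  constructor
  · calc -((Real.exp ε - 1) • x) ≤ -((1 - Real.exp (-ε)) • x) :=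
          neg_le_neg (smul_le_smul_of_nonneg_right hexp hx)
      _ = Real.exp (-ε) • x - x := by module
      _ ≤ y - x := sub_le_sub_right h.symm.1 x
  · calc y - x ≤ Real.exp ε • x - x := sub_le_sub_right h.symm.2 x
      _ = (Real.exp ε - 1) • x := by module

theorem loewnerApprox_of_neg_smul_le_sub_of_sub_le_smul {x y : A} {ρ δ : ℝ} (hx : 0 ≤ x)
    (hlo : -(ρ • x) ≤ y - x) (hhi : y - x ≤ ρ • x) (hδ : 1 ≤ Real.exp δ * (1 - ρ)) :
    LoewnerApprox δ x y := by
  have hρ : 1 + ρ ≤ Real.exp δ := by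
    have h1ρ : 0 < 1 - ρ := by nlinarith [Real.exp_pos δ]
    have : 0 ≤ (Real.exp δ - (1 + ρ)) * (1 - ρ) := by nlinarith [sq_nonneg ρ]
    exact sub_nonneg.1 ((mul_nonneg_iff_of_pos_right h1ρ).1 this)
  have hδ' : Real.exp (-δ) * (1 + ρ) ≤ 1 := by
    rw [Real.exp_neg, inv_mul_le_iff₀ (Real.exp_pos δ)]; linarith
  constructor
  · rw [← sub_nonneg]
    have e : x - Real.exp (-δ) • y
        = Real.exp (-δ) • (ρ • x - (y - x)) + (1 - Real.exp (-δ) * (1 + ρ)) • x := by module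
    rw [e]
    exact add_nonneg (smul_nonneg (Real.exp_pos _).le (sub_nonneg.2 hhi))
      (smul_nonneg (sub_nonneg.2 hδ') hx)
  · rw [← sub_nonneg]
    have e : Real.exp δ • y - x
        = Real.exp δ • (y - x + ρ • x) + (Real.exp δ * (1 - ρ) - 1) • x := by module
    rw [e]
    exact add_nonneg (smul_nonneg (Real.exp_pos _).le (neg_le_iff_add_nonneg.1 hlo))
      (smul_nonneg (sub_nonneg.2 hδ) hx)

end LoewnerApprox

theorem norm_add_pow_sub_pow_le {R : Type*} [NormedRing R] (a e : R) (k : ℕ) :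
    ‖(a + e) ^ k - a ^ k‖ ≤ (‖a‖ + ‖e‖) ^ k - ‖a‖ ^ k := by
  induction k with
  | zero => simp
  | succ k ih =>
    have hak : ‖a ^ k * e‖ ≤ ‖a‖ ^ k * ‖e‖ := by
      rcases k.eq_zero_or_pos with rfl | hk
      · simp
      · exact (norm_mul_le _ _).trans
          (mul_le_mul_of_nonneg_right (norm_pow_le' a hk) (norm_nonneg e))
    calc ‖(a + e) ^ (k + 1) - a ^ (k + 1)‖
        = ‖((a + e) ^ k - a ^ k) * (a + e) + a ^ k * e‖ := by noncomm_ring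
      _ ≤ ((‖a‖ + ‖e‖) ^ k - ‖a‖ ^ k) * (‖a‖ + ‖e‖) + ‖a‖ ^ k * ‖e‖ := by
        refine (norm_add_le _ _).trans (add_le_add ?_ hak)
        exact (norm_mul_le _ _).trans (mul_le_mul ih (norm_add_le a e) (norm_nonneg _)
          ((norm_nonneg _).trans ih))
      _ = (‖a‖ + ‖e‖) ^ (k + 1) - ‖a‖ ^ (k + 1) := by ring

section CStarAlgebra

variable {A : Type*} [CStarAlgebra A] [PartialOrder A] [StarOrderedRing A]

theorem IsSelfAdjoint.norm_le_of_neg_le_of_le [Nontrivial A] {x : A} {r : ℝ}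
    (hx : IsSelfAdjoint x) (hlo : -algebraMap ℝ A r ≤ x) (hhi : x ≤ algebraMap ℝ A r) :
    ‖x‖ ≤ r := by
  rcases CStarAlgebra.norm_or_neg_norm_mem_spectrum hx with h | h
  · exact (le_algebraMap_iff_spectrum_le hx).1 hhi _ h
  · rw [← map_neg] at hlo
    linarith [(algebraMap_le_iff_le_spectrum hx).1 hlo _ h]

theorem IsSelfAdjoint.neg_smul_le_and_le_smul {x c : A} {ρ μ : ℝ} (hx : IsSelfAdjoint x)
    (hρ : 0 ≤ ρ) (hxρ : ‖x‖ ≤ ρ * μ) (hc : algebraMap ℝ A μ ≤ c) :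
    -(ρ • c) ≤ x ∧ x ≤ ρ • c := by
  have hbound : algebraMap ℝ A ‖x‖ ≤ ρ • c :=
    calc algebraMap ℝ A ‖x‖ ≤ algebraMap ℝ A (ρ * μ) := algebraMap_mono A hxρ
      _ = ρ • algebraMap ℝ A μ := by rw [map_mul, Algebra.smul_def]
      _ ≤ ρ • c := smul_le_smul_of_nonneg_left hc hρ
  exact ⟨(neg_le_neg hbound).trans hx.neg_algebraMap_norm_le_self,
    hx.le_algebraMap_norm_self.trans hbound⟩

theorem algebraMap_pow_le_pow {a : A} {m : ℝ} (hm : 0 ≤ m) (ha : algebraMap ℝ A m ≤ a) (k : ℕ) :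
    algebraMap ℝ A (m ^ k) ≤ a ^ k := by
  have ha' : IsSelfAdjoint a := .of_nonneg ((algebraMap_nonneg A hm).trans ha)
  rw [← cfc_pow_id (R := ℝ) a k, ← cfc_const (m ^ k) a, cfc_le_iff ..]
  intro x hx
  exact pow_le_pow_left₀ hm ((algebraMap_le_iff_le_spectrum ha').1 ha x hx) k

theorem LoewnerApprox.norm_sub_le [Nontrivial A] {a b : A} {ε : ℝ} (h : LoewnerApprox ε a b)
    (ha : 0 ≤ a) (hε : 0 ≤ ε) : ‖b - a‖ ≤ (Real.exp ε - 1) * ‖a‖ := by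
  have ht : 0 ≤ Real.exp ε - 1 := sub_nonneg.2 (Real.one_le_exp hε)
  have hsa : IsSelfAdjoint (b - a) := (IsSelfAdjoint.of_nonneg (h.nonneg ha)).sub (.of_nonneg ha)
  obtain ⟨hlo, hhi⟩ := h.neg_smul_le_sub_and_sub_le_smul ha
  have hta : (Real.exp ε - 1) • a ≤ algebraMap ℝ A ((Real.exp ε - 1) * ‖a‖) := by
    rw [map_mul, ← Algebra.smul_def]
    exact smul_le_smul_of_nonneg_left (IsSelfAdjoint.of_nonneg ha).le_algebraMap_norm_self ht
  exact hsa.norm_le_of_neg_le_of_le ((neg_le_neg hta).trans hlo) (hhi.trans hta)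

theorem LoewnerApprox.pow [Nontrivial A] {a b : A} {ε δ m κ : ℝ} (h : LoewnerApprox ε a b)
    (hε : 0 ≤ ε) (hm : 0 < m) (ha_lo : algebraMap ℝ A m ≤ a) (ha_hi : ‖a‖ ≤ κ * m) (k : ℕ)
    (hδ : 1 ≤ Real.exp δ * (1 - κ ^ k * (Real.exp (k * ε) - 1))) :
    LoewnerApprox δ (a ^ k) (b ^ k) := by
  have ha : 0 ≤ a := (algebraMap_nonneg A hm.le).trans ha_lo
  have hκ : 0 ≤ κ := nonneg_of_mul_nonneg_left ((norm_nonneg a).trans ha_hi) hm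
  have hexp : 0 ≤ Real.exp (k * ε) - 1 := sub_nonneg.2 (Real.one_le_exp (by positivity))
  have hnorm : ‖b ^ k - a ^ k‖ ≤ κ ^ k * (Real.exp (k * ε) - 1) * m ^ k :=
    calc ‖b ^ k - a ^ k‖ = ‖(a + (b - a)) ^ k - a ^ k‖ := by rw [add_sub_cancel]
      _ ≤ (‖a‖ + ‖b - a‖) ^ k - ‖a‖ ^ k := norm_add_pow_sub_pow_le a (b - a) k
      _ ≤ (‖a‖ + (Real.exp ε - 1) * ‖a‖) ^ k - ‖a‖ ^ k := by
        gcongr; exact h.norm_sub_le ha hε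
      _ = ‖a‖ ^ k * (Real.exp (k * ε) - 1) := by rw [Real.exp_nat_mul]; ring
      _ ≤ (κ * m) ^ k * (Real.exp (k * ε) - 1) := by gcongr
      _ = κ ^ k * (Real.exp (k * ε) - 1) * m ^ k := by ring
  have hsa : IsSelfAdjoint (b ^ k - a ^ k) :=
    ((IsSelfAdjoint.of_nonneg (h.nonneg ha)).pow k).sub ((IsSelfAdjoint.of_nonneg ha).pow k)
  obtain ⟨hlo, hhi⟩ := hsa.neg_smul_le_and_le_smul (by positivity) hnorm
    (algebraMap_pow_le_pow hm.le ha_lo k)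
  exact loewnerApprox_of_neg_smul_le_sub_of_sub_le_smul (CStarAlgebra.pow_nonneg ha k) hlo hhi hδ

end CStarAlgebra

theorem one_le_exp_mul_one_sub_cube {κ ε : ℝ} (hκ : 1 ≤ κ) (hε : 0 ≤ ε)
    (hκε : 56 * κ ^ 3 * ε ≤ 1) :
    1 ≤ Real.exp (56 * κ ^ 3 * ε) * (1 - κ ^ 3 * (Real.exp (3 * ε) - 1)) := by
  have hκ3 : 1 ≤ κ ^ 3 := one_le_pow₀ hκ
  have hε56 : 56 * ε ≤ 1 := by nlinarith
  have hexp3 : Real.exp (3 * ε) - 1 ≤ 7 * ε := by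
    have h := Real.exp_bound_div_one_sub_of_interval (by positivity : 0 ≤ 3 * ε) (by linarith)
    rw [le_div_iff₀ (by linarith)] at h
    nlinarith
  have hρ : κ ^ 3 * (Real.exp (3 * ε) - 1) ≤ 7 * (κ ^ 3 * ε) := by
    nlinarith [mul_le_mul_of_nonneg_left hexp3 (by positivity : 0 ≤ κ ^ 3)]
  have hlin := Real.add_one_le_exp (56 * κ ^ 3 * ε)
  have hu : 0 ≤ κ ^ 3 * ε := by positivity
  nlinarith [mul_le_mul_of_nonneg_left hρ (Real.exp_pos (56 * κ ^ 3 * ε)).le]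

namespace Matrix

open scoped Matrix.Norms.L2Operator MatrixOrder

variable {𝕜 n : Type*} [RCLike 𝕜] [Fintype n] [DecidableEq n]

theorem IsHermitian.algebraMap_iInf_eigenvalues_le {A : Matrix n n 𝕜} (hA : A.IsHermitian) :
    algebraMap ℝ (Matrix n n 𝕜) (⨅ i, hA.eigenvalues i) ≤ A :=
  algebraMap_le_of_le_spectrum fun x hx => by
    obtain ⟨i, rfl⟩ := hA.spectrum_real_eq_range_eigenvalues ▸ hx
    exact ciInf_le (Set.finite_range _).bddBelow i

theorem IsHermitian.le_algebraMap_iSup_eigenvalues {A : Matrix n n 𝕜} (hA : A.IsHermitian) :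
    A ≤ algebraMap ℝ (Matrix n n 𝕜) (⨆ i, hA.eigenvalues i) :=
  le_algebraMap_of_spectrum_le fun x hx => by
    obtain ⟨i, rfl⟩ := hA.spectrum_real_eq_range_eigenvalues ▸ hx
    exact le_ciSup (Set.finite_range _).bddAbove i

theorem PosDef.iInf_eigenvalues_pos [Nonempty n] {A : Matrix n n 𝕜} (hA : A.PosDef) :
    0 < ⨅ i, hA.1.eigenvalues i := by
  obtain ⟨i, hi⟩ := exists_eq_ciInf_of_finite (f := hA.1.eigenvalues)
  exact hi ▸ hA.eigenvalues_pos i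

theorem PosDef.loewnerApprox_pow [Nonempty n] {A B : Matrix n n ℂ} (hA : A.PosDef) {ε δ : ℝ}
    (h : LoewnerApprox ε A B) (hε : 0 ≤ ε) (k : ℕ)
    (hδ : 1 ≤ Real.exp δ * (1 - ((⨆ i, hA.1.eigenvalues i) / (⨅ i, hA.1.eigenvalues i)) ^ k *
      (Real.exp (k * ε) - 1))) :
    LoewnerApprox δ (A ^ k) (B ^ k) := by
  have hm := hA.iInf_eigenvalues_pos
  have hnorm : ‖A‖ ≤ (⨆ i, hA.1.eigenvalues i) / (⨅ i, hA.1.eigenvalues i) *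
      ⨅ i, hA.1.eigenvalues i := by
    rw [div_mul_cancel₀ _ hm.ne']
    exact (CStarAlgebra.norm_le_iff_le_algebraMap A
      (hm.le.trans (ciInf_le_ciSup (Set.finite_range _).bddBelow (Set.finite_range _).bddAbove))
      hA.posSemidef.nonneg).2 hA.1.le_algebraMap_iSup_eigenvalues
  exact h.pow hε hm hA.1.algebraMap_iInf_eigenvalues_le hnorm k hδ

end Matrix

theorem stmt_4_general {n : Type*} [Fintype n] [DecidableEq n] [Nonempty n]
    (A B : Matrix n n ℂ) (hA : A.PosDef)
    (κ ε : ℝ)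
    (hκ : κ = (⨆ i, hA.1.eigenvalues i) / (⨅ i, hA.1.eigenvalues i))
    (hε0 : 0 < ε) (hε : ε ≤ 1 / (56 * κ ^ 3))
    (h1 : (Real.exp ε • B - A).PosSemidef)
    (h2 : (A - Real.exp (-ε) • B).PosSemidef) :
    (Real.exp (56 * κ ^ 3 * ε) • B ^ 3 - A ^ 3).PosSemidef ∧
      (A ^ 3 - Real.exp (-(56 * κ ^ 3 * ε)) • B ^ 3).PosSemidef := by
  have hκ1 : 1 ≤ κ := by
    rw [hκ, one_le_div hA.iInf_eigenvalues_pos]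
    exact ciInf_le_ciSup (Set.finite_range _).bddBelow (Set.finite_range _).bddAbove
  have hδ := one_le_exp_mul_one_sub_cube hκ1 hε0.le
    (by rwa [le_div_iff₀ (by positivity), mul_comm] at hε)
  have h := hA.loewnerApprox_pow ⟨h2, h1⟩ hε0.le 3 (by rw [← hκ]; exact_mod_cast hδ)
  exact ⟨h.2, h.1⟩

/-- If `A` is Hermitian positive definite with condition number `κ` and
`A ≈_ε B` with `ε ≤ 1/(56 κ³)`, then `A³ ≈_{56 κ³ ε} B³`. -/
theorem stmt_4 {n : Type*} [Fintype n] [DecidableEq n] [Nonempty n]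
    (A B : Matrix n n ℂ) (hA : A.PosDef) (hB : B.PosDef)
    (κ ε : ℝ)
    (hκ : κ = (⨆ i, hA.1.eigenvalues i) / (⨅ i, hA.1.eigenvalues i))
    (hε0 : 0 < ε) (hε : ε ≤ 1 / (56 * κ ^ 3))
    (h1 : (Real.exp ε • B - A).PosSemidef)
    (h2 : (A - Real.exp (-ε) • B).PosSemidef) :
    (Real.exp (56 * κ ^ 3 * ε) • B ^ 3 - A ^ 3).PosSemidef ∧
      (A ^ 3 - Real.exp (-(56 * κ ^ 3 * ε)) • B ^ 3).PosSemidef :=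
  stmt_4_general A B hA κ ε hκ hε0 hε h1 h2
end

section
/- A Hermitian block-matrix M with r×r blocks is block diagonally dominant (for all i, M_{i,i} ⪰ I_r · Σ_{j≠i} ‖M_{i,j}‖) if and only if M can be written as D - A where D is block-diagonal, A is Hermitian, and for all i, D_{i,i} ⪰ I_r · Σ_j ‖A_{i,j}‖. -/
/-!
Splitting `M = D - A` with `D i = M i i` and `A` the negated off-diagonal part turns block diagonal
dominance into the stated condition verbatim. Conversely, given any such splitting, the
off-diagonal norms of `M` are those of `A`, and the diagonal block `A i i` is absorbed using
`‖A i i‖ • 1 - A i i ⪰ 0`, which holds for every Hermitian matrix since its spectrum lies in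
`[-‖A i i‖, ‖A i i‖]`.
-/

open Matrix Finset
open scoped ComplexOrder

/-- The `ℓ²` operator norm of a square complex matrix. -/
noncomputable def matOpNorm {r : ℕ} (A : Matrix (Fin r) (Fin r) ℂ) : ℝ :=
  ‖(Matrix.toEuclideanCLM (𝕜 := ℂ) A : EuclideanSpace ℂ (Fin r) →L[ℂ] EuclideanSpace ℂ (Fin r))‖

/-- A Hermitian block matrix (given by its `r × r` blocks) is block diagonally dominant
if for every `i`, `M i i ⪰ (∑_{j ≠ i} ‖M i j‖) · I`. -/
def IsBDD {n r : ℕ} (M : Fin n → Fin n → Matrix (Fin r) (Fin r) ℂ) : Prop :=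
  ∀ i, (M i i - (∑ j ∈ Finset.univ.erase i, matOpNorm (M i j)) •
      (1 : Matrix (Fin r) (Fin r) ℂ)).PosSemidef

/-- Flatten a block matrix into an ordinary matrix. -/
def flatten {n r : ℕ} (M : Fin n → Fin n → Matrix (Fin r) (Fin r) ℂ) :
    Matrix (Fin n × Fin r) (Fin n × Fin r) ℂ :=
  Matrix.of fun p q => M p.1 q.1 p.2 q.2

lemma posSemidef_matOpNorm_smul_one_sub {r : ℕ} {B : Matrix (Fin r) (Fin r) ℂ}
    (hB : B.IsHermitian) : (matOpNorm B • (1 : Matrix (Fin r) (Fin r) ℂ) - B).PosSemidef := by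
  have hT : IsSelfAdjoint (toEuclideanCLM (𝕜 := ℂ) B) := by
    rw [IsSelfAdjoint, ← map_star]; exact congrArg _ hB
  -- the C⋆-algebra bound `T ≤ ‖T‖ • 1` for self-adjoint operators, read back on matrices
  have h := hT.le_algebraMap_norm_self
  rw [ContinuousLinearMap.le_def, ← ContinuousLinearMap.isPositive_toLinearMap_iff] at h
  rw [← Matrix.isPositive_toEuclideanLin_iff]
  convert h using 1
  rw [← coe_toEuclideanCLM_eq_toEuclideanLin, map_sub, RCLike.real_smul_eq_coe_smul (K := ℂ),
    map_smul, map_one, Algebra.algebraMap_eq_smul_one, RCLike.real_smul_eq_coe_smul (K := ℂ)]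
  rfl

lemma matOpNorm_neg {r : ℕ} (A : Matrix (Fin r) (Fin r) ℂ) : matOpNorm (-A) = matOpNorm A := by
  rw [matOpNorm, matOpNorm, map_neg, norm_neg]

lemma matOpNorm_zero {r : ℕ} : matOpNorm (0 : Matrix (Fin r) (Fin r) ℂ) = 0 := by
  rw [matOpNorm, map_zero, norm_zero]

section Blocks

variable {ι : Type*} [DecidableEq ι] {r : ℕ}

def negOffDiag (M : ι → ι → Matrix (Fin r) (Fin r) ℂ) : ι → ι → Matrix (Fin r) (Fin r) ℂ :=
  fun i j => if i = j then 0 else -M i j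

lemma conjTranspose_negOffDiag {M : ι → ι → Matrix (Fin r) (Fin r) ℂ}
    (hM : ∀ i j, (M i j)ᴴ = M j i) (i j : ι) : (negOffDiag M i j)ᴴ = negOffDiag M j i := by
  by_cases h : i = j
  · simp [negOffDiag, h]
  · simp [negOffDiag, h, Ne.symm h, hM]

lemma sum_matOpNorm_negOffDiag [Fintype ι] (M : ι → ι → Matrix (Fin r) (Fin r) ℂ) (i : ι) :
    ∑ j, matOpNorm (negOffDiag M i j) = ∑ j ∈ univ.erase i, matOpNorm (M i j) := by
  rw [← sum_erase_add univ _ (mem_univ i)]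
  simp only [negOffDiag, if_pos, matOpNorm_zero, add_zero]
  refine sum_congr rfl fun j hj => ?_
  rw [if_neg (ne_of_mem_erase hj).symm, matOpNorm_neg]

lemma posSemidef_sub_sum_erase_of_splitting [Fintype ι] {M A : ι → ι → Matrix (Fin r) (Fin r) ℂ}
    {D : Matrix (Fin r) (Fin r) ℂ} {i : ι} (hA : (A i i).IsHermitian) (hDiag : M i i = D - A i i)
    (hOff : ∀ j ≠ i, M i j = -A i j)
    (hDom : (D - (∑ j, matOpNorm (A i j)) • (1 : Matrix (Fin r) (Fin r) ℂ)).PosSemidef) :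
    (M i i - (∑ j ∈ univ.erase i, matOpNorm (M i j)) •
      (1 : Matrix (Fin r) (Fin r) ℂ)).PosSemidef := by
  have hsum : ∑ j ∈ univ.erase i, matOpNorm (M i j)
      = ∑ j, matOpNorm (A i j) - matOpNorm (A i i) := by
    rw [← sum_erase_eq_sub (mem_univ i)]
    exact sum_congr rfl fun j hj => by rw [hOff j (ne_of_mem_erase hj), matOpNorm_neg]
  have hsplit : M i i - (∑ j ∈ univ.erase i, matOpNorm (M i j)) • (1 : Matrix (Fin r) (Fin r) ℂ)
      = (D - (∑ j, matOpNorm (A i j)) • 1) + (matOpNorm (A i i) • 1 - A i i) := by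
    rw [hDiag, hsum, sub_smul]
    abel
  rw [hsplit]
  exact hDom.add (posSemidef_matOpNorm_smul_one_sub hA)

end Blocks

/-- A Hermitian block matrix `M` is block diagonally dominant iff it can be written as
`D - A` with `D` block diagonal, `A` Hermitian, and `D i ⪰ (∑_j ‖A i j‖) · I` for all `i`. -/
theorem stmt_6 {n r : ℕ} (M : Fin n → Fin n → Matrix (Fin r) (Fin r) ℂ)
    (hHerm : ∀ i j, (M i j)ᴴ = M j i) :
    IsBDD M ↔
      ∃ (D : Fin n → Matrix (Fin r) (Fin r) ℂ)
        (A : Fin n → Fin n → Matrix (Fin r) (Fin r) ℂ),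
        (∀ i j, (A i j)ᴴ = A j i) ∧
        (∀ i, M i i = D i - A i i) ∧
        (∀ i j, i ≠ j → M i j = - A i j) ∧
        (∀ i, (D i - (∑ j, matOpNorm (A i j)) • (1 : Matrix (Fin r) (Fin r) ℂ)).PosSemidef) := by
  constructor
  · intro hM
    refine ⟨fun i => M i i, negOffDiag M, conjTranspose_negOffDiag hHerm,
      fun i => by simp [negOffDiag], fun i j hij => by simp [negOffDiag, hij], fun i => ?_⟩
    rw [sum_matOpNorm_negOffDiag]
    exact hM i
  · rintro ⟨D, A, hA, hDiag, hOff, hDom⟩ i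
    exact posSemidef_sub_sum_erase_of_splitting (hA i i) (hDiag i)
      (fun j hj => hOff i j hj.symm) (hDom i)
end

section
/- Every block diagonally dominant Hermitian matrix is positive semidefinite. -/
open Matrix Finset
open scoped ComplexOrder

/-!
Write `x = (xᵢ)` blockwise and `aᵢ = ‖xᵢ‖`. Dominance gives
`Re xᵢ* Mᵢᵢ xᵢ ≥ (∑_{j ≠ i} ‖Mᵢⱼ‖) aᵢ²`, and Cauchy–Schwarz gives `Re xᵢ* Mᵢⱼ xⱼ ≥ -‖Mᵢⱼ‖ aᵢ aⱼ`.
Hence `Re x* M x ≥ ∑ᵢⱼ ‖Mᵢⱼ‖ (aᵢ² - aᵢ aⱼ) = ½ ∑ᵢⱼ ‖Mᵢⱼ‖ (aᵢ - aⱼ)² ≥ 0`, where the last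
identity uses `‖Mᵢⱼ‖ = ‖Mⱼᵢ‖`; and `x* M x` is real because `M` is Hermitian.
-/

open scoped Matrix.Norms.L2Operator

lemma sum_sum_mul_sq_sub_mul_nonneg {ι : Type*} [Fintype ι] (m : ι → ι → ℝ) (a : ι → ℝ)
    (hm : ∀ i j, 0 ≤ m i j) (hsymm : ∀ i j, m i j = m j i) :
    0 ≤ ∑ i, ∑ j, m i j * (a i ^ 2 - a i * a j) := by
  have hswap : ∑ i, ∑ j, m i j * (a i ^ 2 - a i * a j) =
      ∑ i, ∑ j, m i j * (a j ^ 2 - a j * a i) := by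
    rw [sum_comm]
    simp only [hsymm _ _]
  have hsq : ∑ i, ∑ j, m i j * (a i - a j) ^ 2 =
      ∑ i, ∑ j, m i j * (a i ^ 2 - a i * a j) + ∑ i, ∑ j, m i j * (a j ^ 2 - a j * a i) := by
    simp only [← sum_add_distrib]
    congr! 2 with i - j -
    ring
  have : 0 ≤ ∑ i, ∑ j, m i j * (a i - a j) ^ 2 :=
    sum_nonneg fun i _ ↦ sum_nonneg fun j _ ↦ mul_nonneg (hm i j) (sq_nonneg _)
  linarith

section

variable {𝕜 ι : Type*} [RCLike 𝕜] [Fintype ι] [DecidableEq ι]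

lemma norm_star_dotProduct_mulVec_le (A : Matrix ι ι 𝕜) (u v : ι → 𝕜) :
    ‖star u ⬝ᵥ (A *ᵥ v)‖ ≤ ‖A‖ * ‖WithLp.toLp 2 u‖ * ‖WithLp.toLp 2 v‖ := by
  calc ‖star u ⬝ᵥ (A *ᵥ v)‖
      = ‖inner 𝕜 (WithLp.toLp 2 u) (WithLp.toLp 2 (A *ᵥ v))‖ := by
        rw [EuclideanSpace.inner_toLp_toLp, dotProduct_comm]
    _ ≤ ‖WithLp.toLp 2 u‖ * ‖WithLp.toLp 2 (A *ᵥ v)‖ := norm_inner_le_norm _ _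
    _ ≤ ‖WithLp.toLp 2 u‖ * (‖A‖ * ‖WithLp.toLp 2 v‖) := by
        gcongr; exact A.l2_opNorm_mulVec (WithLp.toLp 2 v)
    _ = _ := by ring

lemma Matrix.PosSemidef.mul_norm_sq_le_re_star_dotProduct_mulVec {A : Matrix ι ι 𝕜} {c : ℝ}
    (hA : (A - c • (1 : Matrix ι ι 𝕜)).PosSemidef) (u : ι → 𝕜) :
    c * ‖WithLp.toLp 2 u‖ ^ 2 ≤ RCLike.re (star u ⬝ᵥ (A *ᵥ u)) := by
  have h := RCLike.nonneg_iff.mp (hA.dotProduct_mulVec_nonneg u) |>.1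
  have hu : RCLike.re (star u ⬝ᵥ u) = ‖WithLp.toLp 2 u‖ ^ 2 := by
    rw [dotProduct_comm, ← EuclideanSpace.inner_toLp_toLp, inner_self_eq_norm_sq]
  rw [sub_mulVec, dotProduct_sub, smul_mulVec, one_mulVec, dotProduct_smul, map_sub,
    RCLike.smul_re, hu] at h
  linarith

variable {κ : Type*} [Fintype κ] [DecidableEq κ]

lemma re_sum_sum_star_dotProduct_mulVec_nonneg (M : ι → ι → Matrix κ κ 𝕜)
    (hsymm : ∀ i j, ‖M i j‖ = ‖M j i‖)
    (hdom : ∀ i, (M i i - (∑ j ∈ univ.erase i, ‖M i j‖) • (1 : Matrix κ κ 𝕜)).PosSemidef)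
    (x : ι → κ → 𝕜) :
    0 ≤ RCLike.re (∑ i, ∑ j, star (x i) ⬝ᵥ (M i j *ᵥ x j)) := by
  set a : ι → ℝ := fun i ↦ ‖WithLp.toLp 2 (x i)‖
  have hrow : ∀ i, ∑ j, ‖M i j‖ * (a i ^ 2 - a i * a j) ≤
      ∑ j, RCLike.re (star (x i) ⬝ᵥ (M i j *ᵥ x j)) := by
    intro i
    have hdiag := (hdom i).mul_norm_sq_le_re_star_dotProduct_mulVec (x i)
    have hoff (j : ι) : -(‖M i j‖ * (a i * a j)) ≤ RCLike.re (star (x i) ⬝ᵥ (M i j *ᵥ x j)) := by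
      have := norm_star_dotProduct_mulVec_le (M i j) (x i) (x j)
      have := (abs_le.mp (RCLike.abs_re_le_norm (star (x i) ⬝ᵥ (M i j *ᵥ x j)))).1
      linarith
    rw [← sum_erase (a := i) _ (by ring), ← add_sum_erase _ _ (mem_univ i)]
    calc ∑ j ∈ univ.erase i, ‖M i j‖ * (a i ^ 2 - a i * a j)
        = (∑ j ∈ univ.erase i, ‖M i j‖) * a i ^ 2 +
            ∑ j ∈ univ.erase i, -(‖M i j‖ * (a i * a j)) := by
          rw [sum_mul, ← sum_add_distrib]
          congr! 1 with j
          ring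
      _ ≤ _ := add_le_add hdiag (sum_le_sum fun j _ ↦ hoff j)
  calc 0 ≤ ∑ i, ∑ j, ‖M i j‖ * (a i ^ 2 - a i * a j) :=
        sum_sum_mul_sq_sub_mul_nonneg _ a (fun _ _ ↦ norm_nonneg _) hsymm
    _ ≤ _ := by
        simp only [map_sum]
        exact sum_le_sum fun i _ ↦ hrow i

end

lemma isHermitian_flatten {n r : ℕ} {M : Fin n → Fin n → Matrix (Fin r) (Fin r) ℂ}
    (hM : ∀ i j, (M i j)ᴴ = M j i) : (flatten M).IsHermitian := by
  ext p q
  simp [flatten, ← hM q.1 p.1]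

lemma star_dotProduct_flatten_mulVec {n r : ℕ} (M : Fin n → Fin n → Matrix (Fin r) (Fin r) ℂ)
    (x : Fin n × Fin r → ℂ) :
    star x ⬝ᵥ (flatten M *ᵥ x) =
      ∑ i, ∑ j, star (fun k ↦ x (i, k)) ⬝ᵥ (M i j *ᵥ fun l ↦ x (j, l)) := by
  simp only [dotProduct, mulVec, flatten, of_apply, Pi.star_apply, Fintype.sum_prod_type, mul_sum]
  exact sum_congr rfl fun i _ ↦ sum_comm

/-- Every block diagonally dominant Hermitian matrix is positive semidefinite. -/
theorem stmt_8 {n r : ℕ} (M : Fin n → Fin n → Matrix (Fin r) (Fin r) ℂ)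
    (hHerm : ∀ i j, (M i j)ᴴ = M j i) (hbdd : IsBDD M) :
    (flatten M).PosSemidef := by
  have hH := isHermitian_flatten hHerm
  have hnorm (i j : Fin n) : ‖M i j‖ = ‖M j i‖ := by rw [← hHerm, l2_opNorm_conjTranspose]
  refine .of_dotProduct_mulVec_nonneg hH fun x ↦
    RCLike.nonneg_iff.mpr ⟨?_, hH.im_star_dotProduct_mulVec_self x⟩
  rw [star_dotProduct_flatten_mulVec]
  -- `matOpNorm A` is by definition the L2 operator norm `‖A‖`.
  exact re_sum_sum_star_dotProduct_mulVec_nonneg M hnorm hbdd _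
end

section
/- The Schur complement of a block diagonally dominant matrix with respect to a single index (with invertible diagonal block) is again block diagonally dominant. -/
open Matrix Finset
open scoped ComplexOrder

/-!
Write `e = M₀₀⁻¹` and `s = ∑_{j ≥ 1} ‖M₀ⱼ‖`. Dominance of row `0` gives `M₀₀ ⪰ s • 1`, hence
`‖e‖ * s ≤ 1` by antitonicity of inversion. In row `i` of the Schur complement each off-diagonal
block grows in norm by at most `‖Mᵢ₀‖ ‖e‖ ‖M₀ⱼ‖`, in total by `‖Mᵢ₀‖ ‖e‖ (s - ‖Mᵢ₀‖)`, while the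
diagonal block loses `Mᵢ₀ e M₀ᵢ ⪯ ‖Mᵢ₀‖² ‖e‖ • 1`. Both losses together amount to
`‖Mᵢ₀‖ ‖e‖ s ≤ ‖Mᵢ₀‖`, which is paid for by the entry `Mᵢ₀` leaving row `i`.
The argument works in any unital C⋆-algebra; block matrices are the case of `r × r` matrices with
the `ℓ²` operator norm and the Loewner order.
-/

open scoped Ring

lemma Fin.sum_erase_zero {M : Type*} [AddCommGroup M] {n : ℕ} (f : Fin (n + 1) → M) :
    ∑ k ∈ univ.erase 0, f k = ∑ j : Fin n, f j.succ := by
  rw [sum_erase_eq_sub (mem_univ 0), Fin.sum_univ_succ, add_sub_cancel_left]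

lemma Fin.sum_erase_succ {M : Type*} [AddCommGroup M] {n : ℕ} (f : Fin (n + 1) → M) (i : Fin n) :
    ∑ k ∈ univ.erase i.succ, f k = f 0 + ∑ j ∈ univ.erase i, f j.succ := by
  rw [sum_erase_eq_sub (mem_univ _), Fin.sum_univ_succ, sum_erase_eq_sub (mem_univ _),
    add_sub_assoc]

/-- `(m 0 0)⁻¹ʳ` is `0` when `m 0 0` is not a unit. -/
noncomputable def blockSchurComplement {R : Type*} [Ring R] {n : ℕ}
    (m : Fin (n + 1) → Fin (n + 1) → R) : Fin n → Fin n → R :=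
  fun i j => m i.succ j.succ - m i.succ 0 * (m 0 0)⁻¹ʳ * m 0 j.succ

section CStarAlgebra

variable {A : Type*} [CStarAlgebra A] [PartialOrder A] [StarOrderedRing A]

def IsBlockDiagDominant {ι : Type*} [Fintype ι] [DecidableEq ι] (m : ι → ι → A) : Prop :=
  ∀ i, algebraMap ℝ A (∑ j ∈ univ.erase i, ‖m i j‖) ≤ m i i

lemma norm_ringInverse_mul_le_one {a : A} {s : ℝ} (hs : 0 ≤ s) (h : algebraMap ℝ A s ≤ a) :
    ‖a⁻¹ʳ‖ * s ≤ 1 := by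
  rcases hs.eq_or_lt with rfl | hs
  · simp
  have hpos : IsStrictlyPositive (algebraMap ℝ A s) := isStrictlyPositive_algebraMap hs
  have hle : a⁻¹ʳ ≤ algebraMap ℝ A s⁻¹ := by
    calc a⁻¹ʳ ≤ (algebraMap ℝ A s)⁻¹ʳ := CStarAlgebra.ringInverse_le_ringInverse h
      _ = algebraMap ℝ A s⁻¹ := by
        rw [eq_comm, ← one_mul (algebraMap ℝ A s)⁻¹ʳ,
          Ring.eq_mul_inverse_iff_mul_eq _ _ _ hpos.isUnit, ← map_mul, inv_mul_cancel₀ hs.ne',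
          map_one]
  have hnorm : ‖a⁻¹ʳ‖ ≤ s⁻¹ :=
    (CStarAlgebra.norm_le_iff_le_algebraMap _ (inv_nonneg.2 hs.le)
      (hpos.of_le h).ringInverse.nonneg).2 hle
  calc ‖a⁻¹ʳ‖ * s ≤ s⁻¹ * s := by gcongr
    _ = 1 := inv_mul_cancel₀ hs.ne'

theorem isBlockDiagDominant_blockSchurComplement {n : ℕ} {m : Fin (n + 1) → Fin (n + 1) → A}
    (hm : IsBlockDiagDominant m) (hstar : ∀ j, star (m j 0) = m 0 j) :
    IsBlockDiagDominant (blockSchurComplement m) := by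
  intro i
  set e := (m 0 0)⁻¹ʳ
  set s := ∑ j : Fin n, ‖m 0 j.succ‖
  set T := ∑ j ∈ univ.erase i, ‖m i.succ j.succ‖
  set β := ‖m i.succ 0‖
  have hnorm_swap : ∀ j, ‖m 0 j‖ = ‖m j 0‖ := fun j => by rw [← hstar, norm_star]
  have he : ‖e‖ * s ≤ 1 :=
    norm_ringInverse_mul_le_one (by positivity) (by simpa only [Fin.sum_erase_zero] using hm 0)
  have hdiag : algebraMap ℝ A (T + β) ≤ m i.succ i.succ := by
    simpa only [Fin.sum_erase_succ, add_comm] using hm i.succ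
  have hconj : m i.succ 0 * e * m 0 i.succ ≤ algebraMap ℝ A (β * ‖e‖ * β) := by
    have hsa : IsSelfAdjoint (m i.succ 0 * e * m 0 i.succ) := by
      rw [← hstar]
      exact (IsSelfAdjoint.ringInverse (hstar 0)).conjugate _
    calc _ ≤ algebraMap ℝ A ‖m i.succ 0 * e * m 0 i.succ‖ := hsa.le_algebraMap_norm_self
      _ ≤ _ := by
        gcongr
        exact norm_mul₃_le.trans_eq (by rw [hnorm_swap])
  have hoff : ∑ j ∈ univ.erase i, ‖blockSchurComplement m i j‖ ≤ T + β * ‖e‖ * (s - β) := by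
    calc _ ≤ ∑ j ∈ univ.erase i, (‖m i.succ j.succ‖ + β * ‖e‖ * ‖m 0 j.succ‖) :=
          sum_le_sum fun j _ => (norm_sub_le _ _).trans (by gcongr; exact norm_mul₃_le)
      _ = _ := by
        have hrow : ∑ j ∈ univ.erase i, ‖m 0 j.succ‖ = s - β := by
          rw [sum_erase_eq_sub (mem_univ i), hnorm_swap]
        rw [sum_add_distrib, ← mul_sum, hrow]
  calc algebraMap ℝ A (∑ j ∈ univ.erase i, ‖blockSchurComplement m i j‖)
      ≤ algebraMap ℝ A (T + β - β * ‖e‖ * β) := by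
        gcongr
        nlinarith [mul_le_mul_of_nonneg_left he (norm_nonneg (m i.succ 0))]
    _ = algebraMap ℝ A (T + β) - algebraMap ℝ A (β * ‖e‖ * β) := map_sub ..
    _ ≤ _ := sub_le_sub hdiag hconj

end CStarAlgebra

open scoped Matrix.Norms.L2Operator MatrixOrder

lemma isBDD_iff_isBlockDiagDominant {n r : ℕ} (M : Fin n → Fin n → Matrix (Fin r) (Fin r) ℂ) :
    IsBDD M ↔ IsBlockDiagDominant M := by
  simp only [IsBDD, IsBlockDiagDominant, Matrix.le_iff, Algebra.algebraMap_eq_smul_one]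
  rfl

theorem stmt_9_general {n r : ℕ} (M : Fin (n + 1) → Fin (n + 1) → Matrix (Fin r) (Fin r) ℂ)
    (hHerm : ∀ i j, (M i j)ᴴ = M j i) (hbdd : IsBDD M) :
    IsBDD (fun i j : Fin n => M i.succ j.succ - M i.succ 0 * (M 0 0)⁻¹ * M 0 j.succ) := by
  simp only [nonsing_inv_eq_ringInverse]
  rw [isBDD_iff_isBlockDiagDominant] at hbdd ⊢
  exact isBlockDiagDominant_blockSchurComplement hbdd fun j => hHerm j 0

/-- The Schur complement of a Hermitian bDD block matrix with respect to a single index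
(whose diagonal block is invertible) is again bDD. -/
theorem stmt_9 {n r : ℕ} (M : Fin (n + 1) → Fin (n + 1) → Matrix (Fin r) (Fin r) ℂ)
    (hHerm : ∀ i j, (M i j)ᴴ = M j i) (hbdd : IsBDD M)
    (hinv : IsUnit (M 0 0)) :
    IsBDD (fun i j : Fin n => M i.succ j.succ - M i.succ 0 * (M 0 0)⁻¹ * M 0 j.succ) :=
  stmt_9_general M hHerm hbdd
end

section
/- Let X and L be Hermitian positive semidefinite matrices with X positive definite and 0 ⪯ L ⪯ β X for some 0 < β < 1. For odd k, define Z_k = Σ_{i=0}^{k} X⁻¹ (-L X⁻¹)^i. Then Z_k is invertible and X + L ⪯ Z_k⁻¹ ⪯ X + (1 + δ) L, where δ = β^k (1+β)/(1-β^{k+1}). -/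
/-!
Write `X = S * S` with `S = X^{1/2}` self-adjoint and invertible, and put `M = S⁻¹ L S⁻¹`, so that
`0 ≤ M ≤ β`. Then `Z_k = S⁻¹ p_k(M) S⁻¹` with `p_k(t) = ∑_{i ≤ k} (-t)^i`, and both bounds are the
`S`-conjugates of `1 + M ≤ p_k(M)⁻¹ ≤ 1 + (1 + δ) M`. By the functional calculus these reduce to
scalar inequalities on the spectrum `[0, β]`: for odd `k`, `p_k(t) (1 + t) = 1 - t^(k+1)`, hence
`p_k(t)⁻¹ = 1 + t + δ(t) t` where `δ(t) = t^k (1 + t) / (1 - t^(k+1))` is nonnegative and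
increasing on `[0, 1)`, and `δ = δ(β)`.
-/

open Finset

noncomputable def neumannSum (k : ℕ) (t : ℝ) : ℝ := ∑ i ∈ range (k + 1), (-t) ^ i

noncomputable def neumannDefect (k : ℕ) (t : ℝ) : ℝ := t ^ k * (1 + t) / (1 - t ^ (k + 1))

section Scalar

variable {k : ℕ} {t : ℝ}

theorem continuous_neumannSum (k : ℕ) : Continuous (neumannSum k) := by
  unfold neumannSum; fun_prop

theorem neumannSum_mul_one_add (hk : Odd k) (t : ℝ) :
    neumannSum k t * (1 + t) = 1 - t ^ (k + 1) := by
  have h := geom_sum_mul (-t) (k + 1)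
  rw [hk.add_one.neg_pow] at h
  unfold neumannSum
  linear_combination -h

theorem neumannSum_pos (hk : Odd k) (ht0 : 0 ≤ t) (ht1 : t < 1) : 0 < neumannSum k t := by
  have h := neumannSum_mul_one_add hk t
  have htk : t ^ (k + 1) < 1 := pow_lt_one₀ ht0 ht1 k.succ_ne_zero
  nlinarith

theorem inv_neumannSum_eq (hk : Odd k) (ht0 : 0 ≤ t) (ht1 : t < 1) :
    (neumannSum k t)⁻¹ = 1 + t + neumannDefect k t * t := by
  have h := neumannSum_mul_one_add hk t
  have hq : 1 - t ^ (k + 1) ≠ 0 := sub_ne_zero.mpr (pow_lt_one₀ ht0 ht1 k.succ_ne_zero).ne'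
  rw [← eq_div_iff (by positivity)] at h
  rw [h, inv_div, neumannDefect]
  field_simp
  ring

theorem neumannDefect_nonneg (ht0 : 0 ≤ t) (ht1 : t < 1) : 0 ≤ neumannDefect k t := by
  have htk : t ^ (k + 1) < 1 := pow_lt_one₀ ht0 ht1 k.succ_ne_zero
  unfold neumannDefect
  exact div_nonneg (by positivity) (by linarith)

theorem neumannDefect_le_neumannDefect {s : ℝ} (hs : 0 ≤ s) (hst : s ≤ t) (ht1 : t < 1) :
    neumannDefect k s ≤ neumannDefect k t := by
  have ht0 : 0 ≤ t := hs.trans hst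
  have htk : t ^ (k + 1) < 1 := pow_lt_one₀ ht0 ht1 k.succ_ne_zero
  unfold neumannDefect
  gcongr

theorem one_add_le_inv_neumannSum (hk : Odd k) (ht0 : 0 ≤ t) (ht1 : t < 1) :
    1 + t ≤ (neumannSum k t)⁻¹ := by
  rw [inv_neumannSum_eq hk ht0 ht1]
  have := mul_nonneg (neumannDefect_nonneg (k := k) ht0 ht1) ht0
  linarith

theorem inv_neumannSum_le {β : ℝ} (hk : Odd k) (ht0 : 0 ≤ t) (htβ : t ≤ β) (hβ1 : β < 1) :
    (neumannSum k t)⁻¹ ≤ 1 + (1 + neumannDefect k β) * t := by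
  rw [inv_neumannSum_eq hk ht0 (htβ.trans_lt hβ1)]
  have := mul_le_mul_of_nonneg_right (neumannDefect_le_neumannDefect (k := k) ht0 htβ hβ1) ht0
  linarith

end Scalar

theorem Units.inv_mul_inv_mul_neg_conj_pow {R : Type*} [Ring R] (u : Rˣ) (m : R) (i : ℕ) :
    (↑u⁻¹ * ↑u⁻¹ : R) * (-(u * m * u * (↑u⁻¹ * ↑u⁻¹))) ^ i = ↑u⁻¹ * (-m) ^ i * ↑u⁻¹ := by
  have h : -((u : R) * m * u * (↑u⁻¹ * ↑u⁻¹)) = u * -m * ↑u⁻¹ := by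
    simp only [mul_neg, neg_mul, ← mul_assoc, Units.mul_inv_cancel_right]
  rw [h, Units.conj_pow]
  simp only [← mul_assoc, Units.inv_mul_cancel_right]

section Operator

variable {A : Type*} [Ring A] [StarRing A] [Algebra ℝ A] [TopologicalSpace A]
  [ContinuousFunctionalCalculus ℝ A IsSelfAdjoint]

theorem cfc_neumannSum (k : ℕ) (a : A) (ha : IsSelfAdjoint a := by cfc_tac) :
    cfc (neumannSum k) a = ∑ i ∈ range (k + 1), (-a) ^ i := by
  have hfun : neumannSum k = ∑ i ∈ range (k + 1), fun t : ℝ => (-t) ^ i := by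
    ext t; simp [neumannSum]
  rw [hfun, cfc_sum _ _ _ (fun i _ => by fun_prop)]
  refine Finset.sum_congr rfl fun i _ => ?_
  rw [cfc_pow (fun t : ℝ => -t) i a, cfc_neg_id (R := ℝ) a]

variable [PartialOrder A] [StarOrderedRing A] [NonnegSpectrumClass ℝ A]

theorem spectrum_subset_Icc_of_nonneg_of_le_algebraMap {a : A} {β : ℝ} (ha0 : 0 ≤ a)
    (haβ : a ≤ algebraMap ℝ A β) : spectrum ℝ a ⊆ Set.Icc 0 β := fun t ht =>
  ⟨(StarOrderedRing.nonneg_iff_spectrum_nonneg a).mp ha0 t ht,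
    (le_algebraMap_iff_spectrum_le).mp haβ t ht⟩

theorem neumann_sum_bounds {m : A} {β : ℝ} {k : ℕ} (hk : Odd k) (hm0 : 0 ≤ m)
    (hmβ : m ≤ algebraMap ℝ A β) (hβ1 : β < 1) :
    IsUnit (∑ i ∈ range (k + 1), (-m) ^ i) ∧
    1 + m ≤ Ring.inverse (∑ i ∈ range (k + 1), (-m) ^ i) ∧
    Ring.inverse (∑ i ∈ range (k + 1), (-m) ^ i) ≤ 1 + (1 + neumannDefect k β) • m := by
  have hspec := spectrum_subset_Icc_of_nonneg_of_le_algebraMap hm0 hmβ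
  have hpos : ∀ t ∈ spectrum ℝ m, neumannSum k t ≠ 0 := fun t ht =>
    (neumannSum_pos hk (hspec ht).1 ((hspec ht).2.trans_lt hβ1)).ne'
  have hcont := (continuous_neumannSum k).continuousOn (s := spectrum ℝ m)
  have hcont_inv : ContinuousOn (fun t => (neumannSum k t)⁻¹) (spectrum ℝ m) :=
    hcont.inv₀ hpos
  rw [← cfc_neumannSum k m, ← cfc_inv _ m hpos]
  have hlow : 1 + m = cfc (fun t : ℝ => 1 + t) m := by
    rw [cfc_const_add 1 (fun t : ℝ => t) m, cfc_id' ℝ m, map_one]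
  have hupp : 1 + (1 + neumannDefect k β) • m
      = cfc (fun t : ℝ => 1 + (1 + neumannDefect k β) * t) m := by
    rw [cfc_const_add 1 _ m, cfc_const_mul_id _ m, map_one]
  refine ⟨(cfcUnits _ m hpos).isUnit, ?_, ?_⟩
  · rw [hlow, cfc_le_iff (fun t : ℝ => 1 + t) _ m (by fun_prop) hcont_inv]
    exact fun t ht => one_add_le_inv_neumannSum hk (hspec ht).1 ((hspec ht).2.trans_lt hβ1)
  · rw [hupp, cfc_le_iff _ (fun t : ℝ => 1 + (1 + neumannDefect k β) * t) m hcont_inv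
      (by fun_prop)]
    exact fun t ht => inv_neumannSum_le hk (hspec ht).1 (hspec ht).2 hβ1

theorem neumann_sum_conj_bounds {u : Aˣ} (hu : IsSelfAdjoint (u : A)) {x l : A}
    (hx : (u : A) * u = x) {β : ℝ} {k : ℕ} (hk : Odd k) (hl0 : 0 ≤ l) (hlx : l ≤ β • x)
    (hβ1 : β < 1) :
    IsUnit (∑ i ∈ range (k + 1), Ring.inverse x * (-(l * Ring.inverse x)) ^ i) ∧
    x + l ≤ Ring.inverse (∑ i ∈ range (k + 1), Ring.inverse x * (-(l * Ring.inverse x)) ^ i) ∧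
    Ring.inverse (∑ i ∈ range (k + 1), Ring.inverse x * (-(l * Ring.inverse x)) ^ i) ≤
      x + (1 + neumannDefect k β) • l := by
  subst hx
  have hu_inv : IsSelfAdjoint (↑u⁻¹ : A) := by
    rw [IsSelfAdjoint, ← Units.coe_star_inv, show star u = u from Units.ext hu.star_eq]
  set m : A := ↑u⁻¹ * l * ↑u⁻¹
  have hl : l = u * m * u := by simp [m, mul_assoc]
  have hx_inv : Ring.inverse ((u : A) * u) = ↑u⁻¹ * ↑u⁻¹ := by
    rw [← Units.val_mul, Ring.inverse_unit, mul_inv_rev, Units.val_mul]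
  have hm0 : 0 ≤ m := hu_inv.conjugate_nonneg hl0
  have hmβ : m ≤ algebraMap ℝ A β := by
    have := hu_inv.conjugate_le_conjugate hlx
    rwa [mul_smul_comm, smul_mul_assoc, ← mul_assoc, Units.inv_mul, one_mul, Units.mul_inv,
      ← Algebra.algebraMap_eq_smul_one] at this
  obtain ⟨⟨w, hw⟩, hlow, hupp⟩ := neumann_sum_bounds hk hm0 hmβ hβ1
  have hz : ∑ i ∈ range (k + 1),
      Ring.inverse ((u : A) * u) * (-(l * Ring.inverse ((u : A) * u))) ^ i = ↑(u⁻¹ * w * u⁻¹) := by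
    simp only [hx_inv, hl, Units.val_mul, Units.inv_mul_inv_mul_neg_conj_pow, ← Finset.mul_sum,
      ← Finset.sum_mul, hw]
  rw [hz, Ring.inverse_unit]
  rw [← hw, Ring.inverse_unit] at hlow hupp
  refine ⟨(u⁻¹ * w * u⁻¹).isUnit, ?_, ?_⟩ <;>
    simp only [mul_inv_rev, inv_inv, Units.val_mul, ← mul_assoc]
  · calc (u : A) * u + l = u * (1 + m) * u := by rw [hl]; noncomm_ring
      _ ≤ u * ↑w⁻¹ * u := hu.conjugate_le_conjugate hlow
  · calc (u : A) * ↑w⁻¹ * u ≤ u * (1 + (1 + neumannDefect k β) • m) * u :=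
          hu.conjugate_le_conjugate hupp
      _ = u * u + (1 + neumannDefect k β) • l := by rw [hl]; noncomm_ring

end Operator

open scoped MatrixOrder ComplexOrder

theorem Matrix.PosDef.exists_isSelfAdjoint_unit_mul_self {n 𝕜 : Type*} [Fintype n]
    [DecidableEq n] [RCLike 𝕜] {X : Matrix n n 𝕜} (hX : X.PosDef) :
    ∃ u : (Matrix n n 𝕜)ˣ, IsSelfAdjoint (u : Matrix n n 𝕜) ∧ (u : Matrix n n 𝕜) * u = X := by
  have hsqrt : CFC.sqrt X * CFC.sqrt X = X := CFC.sqrt_mul_sqrt_self X hX.posSemidef.nonneg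
  obtain ⟨u, hu⟩ : IsUnit (CFC.sqrt X) :=
    isUnit_of_mul_isUnit_left (by rw [hsqrt]; exact hX.isUnit)
  exact ⟨u, hu ▸ (CFC.sqrt_nonneg X).isSelfAdjoint, hu ▸ hsqrt⟩

theorem stmt_11_general {n : Type*} [Fintype n] [DecidableEq n]
    (X L : Matrix n n ℂ) (hX : X.PosDef) (hL : L.PosSemidef)
    (β : ℝ) (hβ1 : β < 1)
    (hLX : (β • X - L).PosSemidef)
    (k : ℕ) (hk : Odd k) :
    IsUnit (∑ i ∈ Finset.range (k + 1), X⁻¹ * (-(L * X⁻¹)) ^ i) ∧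
    ((∑ i ∈ Finset.range (k + 1), X⁻¹ * (-(L * X⁻¹)) ^ i)⁻¹ - (X + L)).PosSemidef ∧
    ((X + (1 + β ^ k * (1 + β) / (1 - β ^ (k + 1))) • L) -
        (∑ i ∈ Finset.range (k + 1), X⁻¹ * (-(L * X⁻¹)) ^ i)⁻¹).PosSemidef := by
  obtain ⟨u, hu, hx⟩ := hX.exists_isSelfAdjoint_unit_mul_self
  have h := neumann_sum_conj_bounds hu hx hk hL.nonneg (Matrix.le_iff.mpr hLX) hβ1
  simp only [← Matrix.nonsing_inv_eq_ringInverse, Matrix.le_iff] at h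
  exact h

/-- Truncated Neumann series bound for Jacobi iteration: with `X` positive definite,
`0 ⪯ L ⪯ β X`, `0 < β < 1` and `k` odd, the operator
`Z_k = ∑_{i=0}^k X⁻¹ (-L X⁻¹)^i` is invertible and
`X + L ⪯ Z_k⁻¹ ⪯ X + (1+δ) L` with `δ = βᵏ (1+β)/(1-β^{k+1})`. -/
theorem stmt_11 {n : Type*} [Fintype n] [DecidableEq n]
    (X L : Matrix n n ℂ) (hX : X.PosDef) (hL : L.PosSemidef)
    (β : ℝ) (hβ0 : 0 < β) (hβ1 : β < 1)
    (hLX : (β • X - L).PosSemidef)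
    (k : ℕ) (hk : Odd k) :
    IsUnit (∑ i ∈ Finset.range (k + 1), X⁻¹ * (-(L * X⁻¹)) ^ i) ∧
    ((∑ i ∈ Finset.range (k + 1), X⁻¹ * (-(L * X⁻¹)) ^ i)⁻¹ - (X + L)).PosSemidef ∧
    ((X + (1 + β ^ k * (1 + β) / (1 - β ^ (k + 1))) • L) -
        (∑ i ∈ Finset.range (k + 1), X⁻¹ * (-(L * X⁻¹)) ^ i)⁻¹).PosSemidef :=
  stmt_11_general X L hX hL β hβ1 hLX k hk
end

section
/- (Squaring identity for matrix inverse) For an invertible matrix D - A with D invertible and D - A D⁻¹ A invertible, one has (D - A)⁻¹ = (1/2)·(D⁻¹ + (I + D⁻¹A)(D - A D⁻¹ A)⁻¹(I + A D⁻¹)). -/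
open Matrix

/-- Squaring identity for the matrix inverse:
`(D - A)⁻¹ = ½ (D⁻¹ + (I + D⁻¹A)(D - A D⁻¹ A)⁻¹(I + A D⁻¹))`. -/
theorem stmt_13 {n : Type*} [Fintype n] [DecidableEq n]
    (D A : Matrix n n ℂ)
    (hD : IsUnit D) (hDA : IsUnit (D - A)) (hDADA : IsUnit (D - A * D⁻¹ * A)) :
    (D - A)⁻¹ = (1 / 2 : ℂ) •
      (D⁻¹ + (1 + D⁻¹ * A) * (D - A * D⁻¹ * A)⁻¹ * (1 + A * D⁻¹)) := by
  have hDdet : IsUnit D.det := (isUnit_iff_isUnit_det D).mp hD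
  have hd1 : D * D⁻¹ = 1 := mul_nonsing_inv D hDdet
  have hBdet : IsUnit (D - A * D⁻¹ * A).det := (isUnit_iff_isUnit_det _).mp hDADA
  have hB : (D - A * D⁻¹ * A) * (D - A * D⁻¹ * A)⁻¹ = 1 := mul_nonsing_inv _ hBdet
  apply inv_eq_right_inv
  have h2 : (D - A) * (1 + D⁻¹ * A) = D - A * D⁻¹ * A := by
    have hDA' : D * (D⁻¹ * A) = A := by rw [← mul_assoc, hd1, one_mul]
    rw [mul_add, mul_one, sub_mul, hDA', mul_assoc]
    abel
  have h3 : (D - A) * D⁻¹ = 1 - A * D⁻¹ := by rw [sub_mul, hd1]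
  rw [Matrix.mul_smul, mul_add, h3, ← mul_assoc, ← mul_assoc, h2, hB, one_mul]
  have h4 : 1 - A * D⁻¹ + (1 + A * D⁻¹) = (1 : Matrix n n ℂ) + 1 := by abel
  rw [h4, smul_add, ← add_smul]
  norm_num
end

section
/- Let M be a block matrix partitioned by F and C with M_{F,F} = D - A, where D is the block-diagonal part and D invertible. Define M₂ = (1/2)·[[D - A D⁻¹ A, M_{F,C} + A D⁻¹ M_{F,C}], [M_{C,F} + M_{C,F} D⁻¹ A, 2 M_{C,C} - M_{C,F} D⁻¹ M_{F,C}]]. Then Schur(M₂, F) = Schur(M, F), i.e., the Schur complements onto C agree, provided D - A and D - A D⁻¹ A are invertible. -/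
open Matrix

/-!
Since `D - A D⁻¹ A = (D - A)(1 + D⁻¹ A)`, cancelling `D - A` on the left gives
`(1 + D⁻¹ A)(D - A D⁻¹ A)⁻¹(1 + A D⁻¹) = 2 (D - A)⁻¹ - D⁻¹`.
Sandwiching this between `M_{C,F}` and `M_{F,C}`, the `D⁻¹` term cancels the correction
`-½ M_{C,F} D⁻¹ M_{F,C}` in the `C,C` block of `M₂`, and what remains is `Schur(M, F)`.
-/

namespace Matrix

variable {n R : Type*} [Fintype n] [DecidableEq n] [CommRing R] {D A : Matrix n n R}

theorem sub_mul_one_add_inv_mul (hD : IsUnit D) :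
    (D - A) * (1 + D⁻¹ * A) = D - A * D⁻¹ * A := by
  have hDD : D * D⁻¹ = 1 := mul_nonsing_inv D ((isUnit_iff_isUnit_det D).mp hD)
  calc (D - A) * (1 + D⁻¹ * A) = D + D * D⁻¹ * A - A - A * D⁻¹ * A := by noncomm_ring
    _ = D - A * D⁻¹ * A := by rw [hDD, one_mul, add_sub_cancel_right]

theorem one_add_inv_mul_mul_inv_mul_one_add_mul_inv (hD : IsUnit D) (hDA : IsUnit (D - A))
    (hS : IsUnit (D - A * D⁻¹ * A)) :
    (1 + D⁻¹ * A) * (D - A * D⁻¹ * A)⁻¹ * (1 + A * D⁻¹) = (2 : R) • (D - A)⁻¹ - D⁻¹ := by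
  have hDD : D * D⁻¹ = 1 := mul_nonsing_inv D ((isUnit_iff_isUnit_det D).mp hD)
  have hDADA : (D - A) * (D - A)⁻¹ = 1 := mul_nonsing_inv _ ((isUnit_iff_isUnit_det _).mp hDA)
  have hSS : (D - A * D⁻¹ * A) * (D - A * D⁻¹ * A)⁻¹ = 1 :=
    mul_nonsing_inv _ ((isUnit_iff_isUnit_det _).mp hS)
  refine hDA.mul_left_cancel ?_
  calc (D - A) * ((1 + D⁻¹ * A) * (D - A * D⁻¹ * A)⁻¹ * (1 + A * D⁻¹))
      = (D - A) * (1 + D⁻¹ * A) * (D - A * D⁻¹ * A)⁻¹ * (1 + A * D⁻¹) := by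
        simp only [Matrix.mul_assoc]
    _ = 1 + A * D⁻¹ := by rw [sub_mul_one_add_inv_mul hD, hSS, Matrix.one_mul]
    _ = (2 : R) • ((D - A) * (D - A)⁻¹) - (D * D⁻¹ - A * D⁻¹) := by
        rw [hDADA, hDD, two_smul]; abel
    _ = (D - A) * ((2 : R) • (D - A)⁻¹ - D⁻¹) := by
        rw [Matrix.mul_sub, Matrix.mul_smul, Matrix.sub_mul D A D⁻¹]

end Matrix

theorem schur_complement_squaring_eq {K F C : Type*} [Field K] [NeZero (2 : K)]
    [Fintype F] [DecidableEq F] (D A : Matrix F F K) (MFC : Matrix F C K)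
    (MCF : Matrix C F K) (MCC : Matrix C C K)
    (hD : IsUnit D) (hDA : IsUnit (D - A)) (hS : IsUnit (D - A * D⁻¹ * A)) :
    (MCC - (1 / 2 : K) • (MCF * D⁻¹ * MFC)) -
        ((1 / 2 : K) • (MCF + MCF * D⁻¹ * A)) *
          ((1 / 2 : K) • (D - A * D⁻¹ * A))⁻¹ *
          ((1 / 2 : K) • (MFC + A * D⁻¹ * MFC)) =
      MCC - MCF * (D - A)⁻¹ * MFC := by
  have h2 : (2 : K) ≠ 0 := two_ne_zero
  have hinv : ((1 / 2 : K) • (D - A * D⁻¹ * A))⁻¹ = (2 : K) • (D - A * D⁻¹ * A)⁻¹ := by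
    have : Invertible (1 / 2 : K) := invertibleOfNonzero (by simpa using h2)
    rw [inv_smul _ _ ((isUnit_iff_isUnit_det _).mp hS), invOf_eq_inv, one_div, inv_inv]
  have hsandwich : ((1 / 2 : K) • (MCF + MCF * D⁻¹ * A)) * ((2 : K) • (D - A * D⁻¹ * A)⁻¹) *
        ((1 / 2 : K) • (MFC + A * D⁻¹ * MFC)) =
      (1 / 2 : K) • (MCF * ((1 + D⁻¹ * A) * (D - A * D⁻¹ * A)⁻¹ * (1 + A * D⁻¹)) * MFC) := by
    simp only [Matrix.smul_mul, Matrix.mul_smul, smul_smul]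
    congr 1
    · field_simp
    · simp only [Matrix.mul_add, Matrix.add_mul, Matrix.mul_assoc, Matrix.mul_one, Matrix.one_mul]
  rw [hinv, hsandwich, one_add_inv_mul_mul_inv_mul_one_add_mul_inv hD hDA hS, Matrix.mul_sub,
    Matrix.sub_mul, Matrix.mul_smul, Matrix.smul_mul, smul_sub, smul_smul, one_div,
    inv_mul_cancel₀ h2, one_smul]
  abel

theorem stmt_14_general {F C : Type*} [Fintype F] [DecidableEq F]
    (D A : Matrix F F ℂ) (MFC : Matrix F C ℂ) (MCF : Matrix C F ℂ) (MCC : Matrix C C ℂ)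
    (hD : IsUnit D) (hDA : IsUnit (D - A)) (hDADA : IsUnit (D - A * D⁻¹ * A)) :
    (MCC - (1 / 2 : ℂ) • (MCF * D⁻¹ * MFC)) -
        ((1 / 2 : ℂ) • (MCF + MCF * D⁻¹ * A)) *
          ((1 / 2 : ℂ) • (D - A * D⁻¹ * A))⁻¹ *
          ((1 / 2 : ℂ) • (MFC + A * D⁻¹ * MFC)) =
      MCC - MCF * (D - A)⁻¹ * MFC :=
  schur_complement_squaring_eq D A MFC MCF MCC hD hDA hDADA

/-- The squaring transformation preserves Schur complements: with `M_FF = D - A`,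
the matrix `M₂` built from one squaring step has the same Schur complement onto `C`
as the original matrix. -/
theorem stmt_14 {F C : Type*} [Fintype F] [DecidableEq F] [Fintype C] [DecidableEq C]
    (D A : Matrix F F ℂ) (MFC : Matrix F C ℂ) (MCF : Matrix C F ℂ) (MCC : Matrix C C ℂ)
    (hD : IsUnit D) (hDA : IsUnit (D - A)) (hDADA : IsUnit (D - A * D⁻¹ * A)) :
    (MCC - (1 / 2 : ℂ) • (MCF * D⁻¹ * MFC)) -
        ((1 / 2 : ℂ) • (MCF + MCF * D⁻¹ * A)) *
          ((1 / 2 : ℂ) • (D - A * D⁻¹ * A))⁻¹ *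
          ((1 / 2 : ℂ) • (MFC + A * D⁻¹ * MFC)) =
      MCC - MCF * (D - A)⁻¹ * MFC :=
  stmt_14_general D A MFC MCF MCC hD hDA hDADA
end

section
/- Let G be a d-regular bipartite graph on vertex sets U, V of equal size with adjacency matrix [[0, A],[Aᵀ, 0]] and all non-trivial eigenvalues bounded by λ. For any bijection π: V → U, the collapse H with (weighted) adjacency matrix A + Aᵀ satisfies: every vertex has weighted degree 2d and every eigenvalue of A + Aᵀ other than 2d (with constant eigenvector) is bounded in absolute value by 2λ. -/
/-!
Write `B = [[0, A], [Aᵀ, 0]]`. Since `A` has constant row and column sums, `B` preserves the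
subspace `W` of vectors summing to zero on each side, and `B` restricted to `W` is symmetric
with all eigenvalues in `[-λ, λ]`; hence `|⟪B w, w⟫| ≤ λ ‖w‖²` on `W`. If `(A + Aᵀ) v = μ v`
with `∑ v = 0`, the doubled vector `w = (v, v)` lies in `W`, and
`⟪B w, w⟫ = ⟪(A + Aᵀ) v, v⟫ = μ ‖v‖²` while `‖w‖² = 2 ‖v‖²`, so `|μ| ≤ 2λ`.
-/

open Matrix Finset Module.End WithLp
open scoped RealInnerProductSpace

theorem LinearMap.IsSymmetric.abs_inner_self_le {E : Type*} [NormedAddCommGroup E]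
    [InnerProductSpace ℝ E] [FiniteDimensional ℝ E] {T : E →ₗ[ℝ] E} (hT : T.IsSymmetric)
    {lam : ℝ} (hlam : ∀ μ, HasEigenvalue T μ → |μ| ≤ lam) (x : E) :
    |⟪T x, x⟫| ≤ lam * ‖x‖ ^ 2 := by
  set b := hT.eigenvectorBasis rfl
  set μ := hT.eigenvalues rfl
  have hquad : ⟪T x, x⟫ = ∑ i, μ i * ⟪b i, x⟫ ^ 2 := by
    rw [← b.sum_inner_mul_inner (T x) x]
    refine sum_congr rfl fun i _ => ?_
    rw [hT, hT.apply_eigenvectorBasis, real_inner_smul_right, real_inner_comm]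
    simp only [RCLike.ofReal_real_eq_id, id_eq]
    ring
  have hnorm : ‖x‖ ^ 2 = ∑ i, ⟪b i, x⟫ ^ 2 := by
    rw [← real_inner_self_eq_norm_sq, ← b.sum_inner_mul_inner x x]
    simp only [real_inner_comm x, sq]
  calc |⟪T x, x⟫| ≤ ∑ i, |μ i * ⟪b i, x⟫ ^ 2| := hquad ▸ abs_sum_le_sum_abs _ _
    _ ≤ ∑ i, lam * ⟪b i, x⟫ ^ 2 := by
      gcongr with i
      rw [abs_mul, abs_sq]
      gcongr
      exact hlam _ (hT.hasEigenvalue_eigenvalues rfl i)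
    _ = lam * ‖x‖ ^ 2 := by rw [hnorm, mul_sum]

theorem Matrix.sum_mulVec_of_forall_sum_eq {m n R : Type*} [Fintype m] [Fintype n]
    [CommSemiring R] {A : Matrix m n R} {c : R} (hcol : ∀ j, ∑ i, A i j = c) (u : n → R) :
    ∑ i, (A *ᵥ u) i = c * ∑ j, u j := by
  simp only [mulVec, dotProduct]
  rw [sum_comm, mul_sum]
  exact sum_congr rfl fun j _ => by rw [← sum_mul, hcol]

theorem Matrix.sumElim_dotProduct_fromBlocks_mulVec_sumElim {n R : Type*} [Fintype n]
    [CommSemiring R] (A : Matrix n n R) (v : n → R) :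
    (fromBlocks 0 A Aᵀ 0 *ᵥ Sum.elim v v) ⬝ᵥ Sum.elim v v = ((A + Aᵀ) *ᵥ v) ⬝ᵥ v := by
  simp [fromBlocks_mulVec, sumElim_dotProduct_sumElim, add_mulVec, add_dotProduct]

def sidesSumZero (U V : Type*) [Fintype U] [Fintype V] :
    Submodule ℝ (EuclideanSpace ℝ (U ⊕ V)) where
  carrier := {w | ∑ i, w (Sum.inl i) = 0 ∧ ∑ j, w (Sum.inr j) = 0}
  add_mem' := by
    rintro w w' ⟨hw₁, hw₂⟩ ⟨hw'₁, hw'₂⟩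
    simp [sum_add_distrib, hw₁, hw₂, hw'₁, hw'₂]
  zero_mem' := by simp
  smul_mem' := by
    rintro c w ⟨hw₁, hw₂⟩
    simp [← mul_sum, hw₁, hw₂]

section Bipartite

variable {U V : Type*} [Fintype U] [Fintype V] [DecidableEq U] [DecidableEq V]

theorem isSymmetric_toEuclideanLin_fromBlocks (A : Matrix U V ℝ) :
    (toEuclideanLin (fromBlocks 0 A Aᵀ 0)).IsSymmetric :=
  isSymmetric_toEuclideanLin_iff.mpr <|
    IsHermitian.fromBlocks (by simp) (conjTranspose_eq_transpose_of_trivial A) (by simp)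

theorem toEuclideanLin_fromBlocks_mem_sidesSumZero {A : Matrix U V ℝ} {r c : ℝ}
    (hrow : ∀ i, ∑ j, A i j = r) (hcol : ∀ j, ∑ i, A i j = c)
    {w : EuclideanSpace ℝ (U ⊕ V)} (hw : w ∈ sidesSumZero U V) :
    toEuclideanLin (fromBlocks 0 A Aᵀ 0) w ∈ sidesSumZero U V := by
  obtain ⟨hw₁, hw₂⟩ := hw
  have hrow' : ∀ j, ∑ i, Aᵀ i j = r := hrow
  constructor
  · simp only [toLpLin_apply, fromBlocks_mulVec, Sum.elim_inl, zero_mulVec, zero_add]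
    rw [sum_mulVec_of_forall_sum_eq hcol]
    simp [hw₂]
  · simp only [toLpLin_apply, fromBlocks_mulVec, Sum.elim_inr, zero_mulVec, add_zero]
    rw [sum_mulVec_of_forall_sum_eq hrow']
    simp [hw₁]

theorem abs_inner_toEuclideanLin_fromBlocks_le {A : Matrix U V ℝ} {r c lam : ℝ}
    (hrow : ∀ i, ∑ j, A i j = r) (hcol : ∀ j, ∑ i, A i j = c)
    (hspec : ∀ (μ : ℝ) (w : U ⊕ V → ℝ), w ≠ 0 →
      (∑ i, w (Sum.inl i)) = 0 → (∑ j, w (Sum.inr j)) = 0 →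
      fromBlocks 0 A Aᵀ 0 *ᵥ w = μ • w → |μ| ≤ lam)
    {w : EuclideanSpace ℝ (U ⊕ V)} (hw : w ∈ sidesSumZero U V) :
    |⟪toEuclideanLin (fromBlocks 0 A Aᵀ 0) w, w⟫| ≤ lam * ‖w‖ ^ 2 := by
  have hinv : ∀ w ∈ sidesSumZero U V,
      toEuclideanLin (fromBlocks 0 A Aᵀ 0) w ∈ sidesSumZero U V :=
    fun _ => toEuclideanLin_fromBlocks_mem_sidesSumZero hrow hcol
  have hlam : ∀ μ, HasEigenvalue (LinearMap.restrict _ hinv) μ → |μ| ≤ lam := by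
    intro μ hμ
    obtain ⟨x, hx⟩ := hμ.exists_hasEigenvector
    refine hspec μ x.1 ?_ x.2.1 x.2.2 (congrArg (fun y => ofLp y.1) hx.apply_eq_smul)
    exact fun h => hx.2 (Subtype.ext ((ofLp_eq_zero 2).mp h))
  simpa using ((isSymmetric_toEuclideanLin_fromBlocks A).restrict_invariant hinv).abs_inner_self_le
    hlam ⟨w, hw⟩

end Bipartite

theorem stmt_17_general {V : Type*} [Fintype V]
    (A : Matrix V V ℝ) (d lam : ℝ)
    (hrow : ∀ i, ∑ j, A i j = d)
    (hcol : ∀ j, ∑ i, A i j = d)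
    (hspec : ∀ (μ : ℝ) (w : V ⊕ V → ℝ), w ≠ 0 →
      (∑ i, w (Sum.inl i)) = 0 → (∑ i, w (Sum.inr i)) = 0 →
      (Matrix.fromBlocks 0 A Aᵀ 0).mulVec w = μ • w → |μ| ≤ lam) :
    (∀ i, ∑ j, (A + Aᵀ) i j = 2 * d) ∧
    (∀ (μ : ℝ) (v : V → ℝ), v ≠ 0 → (∑ i, v i) = 0 →
      (A + Aᵀ).mulVec v = μ • v → |μ| ≤ 2 * lam) := by
  refine ⟨fun i => by simp [sum_add_distrib, hrow, hcol, two_mul], fun μ v hv hsum hev => ?_⟩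
  classical
  obtain ⟨w, hw⟩ : ∃ w : EuclideanSpace ℝ (V ⊕ V), ofLp w = Sum.elim v v := ⟨toLp 2 _, rfl⟩
  have hquad : ⟪toEuclideanLin (fromBlocks 0 A Aᵀ 0) w, w⟫ = μ * (v ⬝ᵥ v) := by
    rw [EuclideanSpace.inner_eq_star_dotProduct, dotProduct_comm]
    simpa [hw, hev] using sumElim_dotProduct_fromBlocks_mulVec_sumElim A v
  have hnorm : ‖w‖ ^ 2 = 2 * (v ⬝ᵥ v) := by
    rw [← real_inner_self_eq_norm_sq, EuclideanSpace.inner_eq_star_dotProduct]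
    simp [hw, sumElim_dotProduct_sumElim, two_mul]
  have hpos : 0 < v ⬝ᵥ v := by simpa using dotProduct_self_star_pos_iff.mpr hv
  have key := abs_inner_toEuclideanLin_fromBlocks_le hrow hcol hspec
    (show w ∈ sidesSumZero V V by simp [sidesSumZero, hw, hsum])
  rw [hquad, hnorm, abs_mul, abs_of_pos hpos, ← mul_assoc, mul_comm lam] at key
  exact le_of_mul_le_mul_right key hpos

/-- Collapse of a bipartite expander: if the `d`-regular bipartite graph with adjacency
matrix `[[0, A], [Aᵀ, 0]]` has all non-trivial eigenvalues bounded by `λ`, then its collapse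
(with weighted adjacency matrix `A + Aᵀ`, identifying the two sides via the identity
bijection) has every vertex of weighted degree `2d`, and every eigenvalue other than `2d`
(equivalently, every eigenvalue on a vector orthogonal to the constant vector) is bounded
in absolute value by `2λ`. -/
theorem stmt_17 {V : Type*} [Fintype V] [DecidableEq V]
    (A : Matrix V V ℝ) (d lam : ℝ)
    (hrow : ∀ i, ∑ j, A i j = d)
    (hcol : ∀ j, ∑ i, A i j = d)
    (hspec : ∀ (μ : ℝ) (w : V ⊕ V → ℝ), w ≠ 0 →
      (∑ i, w (Sum.inl i)) = 0 → (∑ i, w (Sum.inr i)) = 0 →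
      (Matrix.fromBlocks 0 A Aᵀ 0).mulVec w = μ • w → |μ| ≤ lam) :
    (∀ i, ∑ j, (A + Aᵀ) i j = 2 * d) ∧
    (∀ (μ : ℝ) (v : V → ℝ), v ≠ 0 → (∑ i, v i) = 0 →
      (A + Aᵀ).mulVec v = μ • v → |μ| ≤ 2 * lam) :=
  stmt_17_general A d lam hrow hcol hspec
end

section
/- In the product demand graph setting with demands d_i ≤ 1 for i in L and d_h = 1 for h in H, for any l ∈ L and h₁, h₂ ∈ H and any 0 < ε ≤ 1: e^{-4√ε}·(ε·L(h₂,l) + (1/2)L(h₁,h₂)) ⪯ ε·L(h₁,l) + (1/2)L(h₁,h₂) ⪯ e^{4√ε}·(ε·L(h₂,l) + (1/2)L(h₁,h₂)), where L(u,v) denotes d_u·d_v times the Laplacian of the unit edge {u,v}. -/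
open Matrix Finset

/-- The Laplacian of a single unit-weight edge `{u, v}`: `(e_u - e_v)(e_u - e_v)ᵀ`. -/
def edgeLap {V : Type*} [DecidableEq V] (u v : V) : Matrix V V ℝ :=
  Matrix.of fun a b =>
    ((if a = u then (1 : ℝ) else 0) - (if a = v then 1 else 0)) *
    ((if b = u then (1 : ℝ) else 0) - (if b = v then 1 else 0))

/-! With `r = x h₁ - x l`, `s = x h₂ - x l` and `c = ε d_l ≤ ε`, the two quadratic forms are
`c r² + ½ (r - s)²` and `c s² + ½ (r - s)²`. Young's inequality with weight `√ε` gives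
`c r² ≤ (1 + √ε) c s² + c (1 + 1/√ε) (r - s)²`, and `c (1 + 1/√ε) ≤ ε + √ε ≤ 2√ε`, so the first
form is at most `1 + 4√ε ≤ e^{4√ε}` times the second; the other direction is symmetric. -/

lemma sq_le_one_add_mul_sq_add {δ : ℝ} (hδ : 0 < δ) (r s : ℝ) :
    r ^ 2 ≤ (1 + δ) * s ^ 2 + (1 + δ⁻¹) * (r - s) ^ 2 := by
  have key : (1 + δ) * s ^ 2 + (1 + δ⁻¹) * (r - s) ^ 2 - r ^ 2 = (δ * s - (r - s)) ^ 2 / δ := by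
    field_simp
    ring
  rw [← sub_nonneg, key]
  positivity

lemma mul_sq_add_half_sq_le_one_add {c ε : ℝ} (hc0 : 0 ≤ c) (hcε : c ≤ ε) (hε0 : 0 < ε)
    (hε1 : ε ≤ 1) (r s : ℝ) :
    c * r ^ 2 + 1 / 2 * (r - s) ^ 2 ≤ (1 + 4 * √ε) * (c * s ^ 2 + 1 / 2 * (s - r) ^ 2) := by
  set q := √ε
  have hq0 : 0 < q := Real.sqrt_pos.mpr hε0
  have hq1 : q ≤ 1 := Real.sqrt_le_one.mpr hε1
  have hqq : q * q = ε := Real.mul_self_sqrt hε0.le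
  have hcoef : c * (1 + q⁻¹) ≤ 2 * q := by
    calc c * (1 + q⁻¹) ≤ q * q * (1 + q⁻¹) := by rw [hqq]; gcongr
      _ = q * q + q := by field_simp
      _ ≤ 2 * q := by nlinarith
  have hyoung : c * r ^ 2 ≤ (1 + q) * (c * s ^ 2) + 2 * q * (r - s) ^ 2 := by
    calc c * r ^ 2 ≤ c * ((1 + q) * s ^ 2 + (1 + q⁻¹) * (r - s) ^ 2) :=
          mul_le_mul_of_nonneg_left (sq_le_one_add_mul_sq_add hq0 r s) hc0
      _ = (1 + q) * (c * s ^ 2) + c * (1 + q⁻¹) * (r - s) ^ 2 := by ring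
      _ ≤ (1 + q) * (c * s ^ 2) + 2 * q * (r - s) ^ 2 := by gcongr
  nlinarith [mul_nonneg hc0 (sq_nonneg s), hq0.le]

lemma mul_sq_add_half_sq_le_exp {c ε : ℝ} (hc0 : 0 ≤ c) (hcε : c ≤ ε) (hε0 : 0 < ε)
    (hε1 : ε ≤ 1) (r s : ℝ) :
    c * r ^ 2 + 1 / 2 * (r - s) ^ 2 ≤ Real.exp (4 * √ε) * (c * s ^ 2 + 1 / 2 * (s - r) ^ 2) :=
  (mul_sq_add_half_sq_le_one_add hc0 hcε hε0 hε1 r s).trans <|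
    mul_le_mul_of_nonneg_right (by linarith [Real.add_one_le_exp (4 * √ε)]) (by positivity)

lemma posSemidef_sub_of_dotProduct_mulVec_le {n : Type*} [Fintype n] {A B : Matrix n n ℝ}
    (hA : A.IsHermitian) (hB : B.IsHermitian) (h : ∀ x, x ⬝ᵥ (B *ᵥ x) ≤ x ⬝ᵥ (A *ᵥ x)) :
    (A - B).PosSemidef :=
  .of_dotProduct_mulVec_nonneg (hA.sub hB) fun x => by
    simpa [sub_mulVec, dotProduct_sub] using h x

section EdgeLap

variable {V : Type*} [DecidableEq V]

lemma isHermitian_edgeLap (u v : V) : (edgeLap u v).IsHermitian := by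
  ext i j
  simp [edgeLap, mul_comm]

lemma isHermitian_smul_edgeLap_add (a b : ℝ) (u v u' v' : V) :
    (a • edgeLap u v + b • edgeLap u' v').IsHermitian :=
  ((isHermitian_edgeLap u v).smul (.all a)).add ((isHermitian_edgeLap u' v').smul (.all b))

variable [Fintype V]

lemma edgeLap_mulVec (u v : V) (x : V → ℝ) (a : V) :
    (edgeLap u v *ᵥ x) a =
      ((if a = u then 1 else 0) - (if a = v then 1 else 0)) * (x u - x v) := by
  simp [edgeLap, mulVec, dotProduct, sub_mul, mul_sub, Finset.sum_sub_distrib, ite_mul]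

lemma dotProduct_edgeLap_mulVec (u v : V) (x : V → ℝ) :
    x ⬝ᵥ (edgeLap u v *ᵥ x) = (x u - x v) ^ 2 := by
  simp only [dotProduct, edgeLap_mulVec]
  simp only [mul_sub, sub_mul, ite_mul, one_mul, zero_mul, mul_ite, mul_zero, sum_sub_distrib,
    sum_ite_eq', mem_univ, ↓reduceIte]
  ring

lemma dotProduct_smul_edgeLap_add_mulVec (a b : ℝ) (u v u' v' : V) (x : V → ℝ) :
    x ⬝ᵥ ((a • edgeLap u v + b • edgeLap u' v') *ᵥ x) =
      a * (x u - x v) ^ 2 + b * (x u' - x v') ^ 2 := by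
  simp only [add_mulVec, smul_mulVec, dotProduct_add, dotProduct_smul, smul_eq_mul,
    dotProduct_edgeLap_mulVec]

theorem posSemidef_sub_exp_smul_edgeLap {c ε : ℝ} (hc0 : 0 ≤ c) (hcε : c ≤ ε) (hε0 : 0 < ε)
    (hε1 : ε ≤ 1) (l h₁ h₂ : V) :
    (c • edgeLap h₁ l + (1 / 2 : ℝ) • edgeLap h₁ h₂ -
        Real.exp (-(4 * √ε)) • (c • edgeLap h₂ l + (1 / 2 : ℝ) • edgeLap h₁ h₂)).PosSemidef ∧
    (Real.exp (4 * √ε) • (c • edgeLap h₂ l + (1 / 2 : ℝ) • edgeLap h₁ h₂) -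
        (c • edgeLap h₁ l + (1 / 2 : ℝ) • edgeLap h₁ h₂)).PosSemidef := by
  have hquad := dotProduct_smul_edgeLap_add_mulVec (V := V)
  have hherm := isHermitian_smul_edgeLap_add (V := V)
  have hbound (x : V → ℝ) (u w : V) :=
    mul_sq_add_half_sq_le_exp hc0 hcε hε0 hε1 (x u - x l) (x w - x l)
  simp only [sub_sub_sub_cancel_right] at hbound
  constructor
  · refine posSemidef_sub_of_dotProduct_mulVec_le (hherm ..) ((hherm ..).smul (.all _))
      fun x => ?_
    rw [smul_mulVec, dotProduct_smul, smul_eq_mul, hquad, hquad, Real.exp_neg,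
      inv_mul_le_iff₀ (Real.exp_pos _)]
    linarith [hbound x h₂ h₁]
  · refine posSemidef_sub_of_dotProduct_mulVec_le ((hherm ..).smul (.all _)) (hherm ..)
      fun x => ?_
    rw [smul_mulVec, dotProduct_smul, smul_eq_mul, hquad, hquad]
    linarith [hbound x h₁ h₂]

end EdgeLap

/-- In a product demand graph with demands `d` where `d l ≤ 1` and `d h₁ = d h₂ = 1`, for
`0 < ε ≤ 1` one has
`ε L(h₁,l) + ½ L(h₁,h₂) ≈_{4√ε} ε L(h₂,l) + ½ L(h₁,h₂)`,
where `L(u,v) = d_u d_v` times the Laplacian of the unit edge `{u,v}`. -/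
theorem stmt_19 {V : Type*} [Fintype V] [DecidableEq V]
    (d : V → ℝ) (hd : ∀ v, 0 < d v)
    (l h₁ h₂ : V) (hl : d l ≤ 1) (hh₁ : d h₁ = 1) (hh₂ : d h₂ = 1)
    (ε : ℝ) (hε0 : 0 < ε) (hε1 : ε ≤ 1) :
    ((ε • ((d h₁ * d l) • edgeLap h₁ l) + (1 / 2 : ℝ) • ((d h₁ * d h₂) • edgeLap h₁ h₂)) -
        Real.exp (-(4 * Real.sqrt ε)) •
          (ε • ((d h₂ * d l) • edgeLap h₂ l) +
            (1 / 2 : ℝ) • ((d h₁ * d h₂) • edgeLap h₁ h₂))).PosSemidef ∧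
    (Real.exp (4 * Real.sqrt ε) •
          (ε • ((d h₂ * d l) • edgeLap h₂ l) +
            (1 / 2 : ℝ) • ((d h₁ * d h₂) • edgeLap h₁ h₂)) -
        (ε • ((d h₁ * d l) • edgeLap h₁ l) +
          (1 / 2 : ℝ) • ((d h₁ * d h₂) • edgeLap h₁ h₂))).PosSemidef := by
  simp only [hh₁, hh₂, one_mul, one_smul, smul_smul]
  exact posSemidef_sub_exp_smul_edgeLap (mul_nonneg hε0.le (hd l).le)
    (mul_le_of_le_one_right hε0.le hl) hε0 hε1 l h₁ h₂
end
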